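/- arXiv:2408.04228 — 9 statements merged into one kernel-verified Lean document; each statement's English description precedes it below -/
import Mathlib

section
/- Let α < β be real numbers, let g : [α,β] → ℝ be continuous with g(β) > g(α), and let γ ∈ [α,β]. If F(α) ≥ F(γ), then ∫_α^γ g(x) dx ≤ (g(α) + g(β))·(γ − α)/2, i.e. ∫_α^γ ( g(x) − g(α) ) dx ≤ (g(β) − g(α))·(γ − α)/2. -/
/-! Splitting `F(α)` at `γ`, the hypothesis `F(α) ≥ F(γ)` says that on `[α, γ]` the constant
`g(α)` is no closer to `g` in `L²` than the constant `g(β)`. Since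
`(b - g)² - (a - g)² = (b - a)(a + b - 2g)` and `b - a > 0`, this means that the mean of `g`
over `[α, γ]` is at most the midpoint `(g(α) + g(β)) / 2`. -/

open MeasureTheory

theorem integral_sq_sub_sub_integral_sq_sub {f : ℝ → ℝ} {a b s t : ℝ}
    (hf : IntervalIntegrable f volume s t)
    (hfa : IntervalIntegrable (fun x => (a - f x) ^ 2) volume s t)
    (hfb : IntervalIntegrable (fun x => (b - f x) ^ 2) volume s t) :
    (∫ x in s..t, (b - f x) ^ 2) - ∫ x in s..t, (a - f x) ^ 2
      = (b - a) * ((a + b) * (t - s) - 2 * ∫ x in s..t, f x) := by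
  have hpoint : ∀ x, (b - f x) ^ 2 - (a - f x) ^ 2 = (b - a) * ((a + b) - 2 * f x) := by
    intro x; ring
  rw [← intervalIntegral.integral_sub hfb hfa]
  simp_rw [hpoint]
  rw [intervalIntegral.integral_const_mul,
    intervalIntegral.integral_sub intervalIntegrable_const (hf.const_mul 2),
    intervalIntegral.integral_const_mul, intervalIntegral.integral_const, smul_eq_mul]
  ring

theorem integral_sub_le_of_integral_sq_sub_le {f : ℝ → ℝ} {a b s t : ℝ} (hab : a < b)
    (hf : IntervalIntegrable f volume s t)
    (hfa : IntervalIntegrable (fun x => (a - f x) ^ 2) volume s t)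
    (hfb : IntervalIntegrable (fun x => (b - f x) ^ 2) volume s t)
    (hle : ∫ x in s..t, (a - f x) ^ 2 ≤ ∫ x in s..t, (b - f x) ^ 2) :
    ∫ x in s..t, (f x - a) ≤ (b - a) * (t - s) / 2 := by
  have hmid : 0 ≤ (a + b) * (t - s) - 2 * ∫ x in s..t, f x := by
    have h := integral_sq_sub_sub_integral_sq_sub hf hfa hfb
    exact nonneg_of_mul_nonneg_right (h ▸ sub_nonneg.mpr hle) (sub_pos.mpr hab)
  rw [intervalIntegral.integral_sub hf intervalIntegrable_const, intervalIntegral.integral_const,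
    smul_eq_mul]
  linarith

theorem fidelity_average_bound_general (α β : ℝ) (g : ℝ → ℝ)
    (hg : ContinuousOn g (Set.Icc α β)) (hgab : g α < g β)
    (γ : ℝ) (hγ : γ ∈ Set.Icc α β)
    (hF : (∫ x in α..γ, (g α - g x) ^ 2) + (∫ x in γ..β, (g β - g x) ^ 2)
        ≤ ∫ x in α..β, (g β - g x) ^ 2) :
    (∫ x in α..γ, (g x - g α)) ≤ (g β - g α) * (γ - α) / 2 := by
  obtain ⟨hαγ, hγβ⟩ := hγ
  have hleft : ContinuousOn g (Set.uIcc α γ) :=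
    hg.mono (by rw [Set.uIcc_of_le hαγ]; exact Set.Icc_subset_Icc le_rfl hγβ)
  have hright : ContinuousOn g (Set.uIcc γ β) :=
    hg.mono (by rw [Set.uIcc_of_le hγβ]; exact Set.Icc_subset_Icc hαγ le_rfl)
  have hsq : ∀ c, ∀ {s t}, ContinuousOn g (Set.uIcc s t) →
      IntervalIntegrable (fun x => (c - g x) ^ 2) volume s t :=
    fun c _ _ h => ((continuousOn_const.sub h).pow 2).intervalIntegrable
  have hcloser : ∫ x in α..γ, (g α - g x) ^ 2 ≤ ∫ x in α..γ, (g β - g x) ^ 2 := by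
    have hsplit :=
      intervalIntegral.integral_add_adjacent_intervals (hsq (g β) hleft) (hsq (g β) hright)
    linarith
  exact integral_sub_le_of_integral_sq_sub_le hgab hleft.intervalIntegrable
    (hsq (g α) hleft) (hsq (g β) hleft) hcloser

/-- If `g ∈ C[α,β]` with `g(β) > g(α)` and `γ ∈ [α,β]` satisfies `F(α) ≥ F(γ)`, where
`F(γ) = ∫_α^γ (g(α)-g)² + ∫_γ^β (g(β)-g)²`, then
`∫_α^γ (g(x) - g(α)) dx ≤ (g(β)-g(α))·(γ-α)/2`. -/
theorem fidelity_average_bound (α β : ℝ) (hαβ : α < β) (g : ℝ → ℝ)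
    (hg : ContinuousOn g (Set.Icc α β)) (hgab : g α < g β)
    (γ : ℝ) (hγ : γ ∈ Set.Icc α β)
    (hF : (∫ x in α..γ, (g α - g x) ^ 2) + (∫ x in γ..β, (g β - g x) ^ 2)
        ≤ ∫ x in α..β, (g β - g x) ^ 2) :
    (∫ x in α..γ, (g x - g α)) ≤ (g β - g α) * (γ - α) / 2 :=
  fidelity_average_bound_general α β g hg hgab γ hγ hF
end

section
/- Let α < β be real numbers, let g : [α,β] → ℝ be continuous with ρ := g(β) − g(α) > 0, let γ ∈ [α,β] satisfy F(α) ≥ F(γ), and let ρ₁ > 0. Then ∫_α^γ ( g(α) − ρ₁ − g(x) )² dx − ∫_α^γ ( g(α) − g(x) )² dx ≤ ρ₁·(ρ₁ + ρ)·(γ − α). -/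
/-
On (α, γ), the difference of ∫ (c - g)² for two constants c depends on g only through
I = ∫ g, since the ∫ g² terms cancel. Comparing c = g(α) with c = g(β) turns F(γ) ≤ F(α) into
2I ≤ (g(α) + g(β))(γ - α): the mean of g on (α, γ) is at most the midpoint of g(α) and g(β).
The shift to c = g(α) - ρ₁ changes the integral by ρ₁²(γ - α) - 2ρ₁(g(α)(γ - α) - I), which
that bound on I controls.
-/

open MeasureTheory

section SquareDistanceToConstant

variable {a b c d : ℝ} {g : ℝ → ℝ}

theorem integral_sub_sq_sub_integral_sub_sq (hg : IntervalIntegrable g volume a b)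
    (hc : IntervalIntegrable (fun x => (c - g x) ^ 2) volume a b)
    (hd : IntervalIntegrable (fun x => (d - g x) ^ 2) volume a b) :
    (∫ x in a..b, (c - g x) ^ 2) - (∫ x in a..b, (d - g x) ^ 2)
      = (c ^ 2 - d ^ 2) * (b - a) - 2 * (c - d) * ∫ x in a..b, g x := by
  have hpointwise : ∀ x, (c - g x) ^ 2 - (d - g x) ^ 2 = (c ^ 2 - d ^ 2) + -(2 * (c - d)) * g x :=
    fun x => by ring
  rw [← intervalIntegral.integral_sub hc hd]
  simp_rw [hpointwise]
  rw [intervalIntegral.integral_add intervalIntegrable_const (hg.const_mul _),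
    intervalIntegral.integral_const_mul, intervalIntegral.integral_const, smul_eq_mul]
  ring

theorem two_mul_integral_le_of_integral_sub_sq_le (hcd : c < d)
    (hg : IntervalIntegrable g volume a b)
    (hc : IntervalIntegrable (fun x => (c - g x) ^ 2) volume a b)
    (hd : IntervalIntegrable (fun x => (d - g x) ^ 2) volume a b)
    (hle : (∫ x in a..b, (c - g x) ^ 2) ≤ ∫ x in a..b, (d - g x) ^ 2) :
    2 * (∫ x in a..b, g x) ≤ (c + d) * (b - a) := by
  have hdiff := integral_sub_sq_sub_integral_sub_sq hg hd hc
  have hscaled : (d - c) * (2 * ∫ x in a..b, g x) ≤ (d - c) * ((c + d) * (b - a)) := by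
    nlinarith
  exact le_of_mul_le_mul_left hscaled (sub_pos.mpr hcd)

theorem integral_sub_sub_sq_sub_integral_sub_sq_le {t : ℝ} (ht : 0 ≤ t)
    (hg : IntervalIntegrable g volume a b)
    (hct : IntervalIntegrable (fun x => (c - t - g x) ^ 2) volume a b)
    (hc : IntervalIntegrable (fun x => (c - g x) ^ 2) volume a b)
    (hmean : 2 * (∫ x in a..b, g x) ≤ (c + d) * (b - a)) :
    (∫ x in a..b, (c - t - g x) ^ 2) - (∫ x in a..b, (c - g x) ^ 2)
      ≤ t * (t + (d - c)) * (b - a) := by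
  rw [integral_sub_sq_sub_integral_sub_sq hg hct hc]
  nlinarith [mul_le_mul_of_nonneg_left hmean ht]

end SquareDistanceToConstant

theorem fidelity_shift_bound_general (α β : ℝ) (g : ℝ → ℝ)
    (hg : ContinuousOn g (Set.Icc α β)) (ρ : ℝ) (hρdef : ρ = g β - g α) (hρpos : 0 < ρ)
    (γ : ℝ) (hγ : γ ∈ Set.Icc α β)
    (hF : (∫ x in α..γ, (g α - g x) ^ 2) + (∫ x in γ..β, (g β - g x) ^ 2)
        ≤ ∫ x in α..β, (g β - g x) ^ 2)
    (ρ₁ : ℝ) (hρ₁ : 0 < ρ₁) :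
    (∫ x in α..γ, (g α - ρ₁ - g x) ^ 2) - (∫ x in α..γ, (g α - g x) ^ 2)
      ≤ ρ₁ * (ρ₁ + ρ) * (γ - α) := by
  obtain ⟨hαγ, hγβ⟩ := hγ
  have hg₁ : ContinuousOn g (Set.uIcc α γ) := by
    rw [Set.uIcc_of_le hαγ]; exact hg.mono (Set.Icc_subset_Icc le_rfl hγβ)
  have hg₂ : ContinuousOn g (Set.uIcc γ β) := by
    rw [Set.uIcc_of_le hγβ]; exact hg.mono (Set.Icc_subset_Icc hαγ le_rfl)
  have hsq₁ (c : ℝ) : IntervalIntegrable (fun x => (c - g x) ^ 2) volume α γ :=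
    ((continuousOn_const.sub hg₁).pow 2).intervalIntegrable
  have hsq₂ : IntervalIntegrable (fun x => (g β - g x) ^ 2) volume γ β :=
    ((continuousOn_const.sub hg₂).pow 2).intervalIntegrable
  have hleft : (∫ x in α..γ, (g α - g x) ^ 2) ≤ ∫ x in α..γ, (g β - g x) ^ 2 := by
    linarith [intervalIntegral.integral_add_adjacent_intervals (hsq₁ (g β)) hsq₂]
  have hmean := two_mul_integral_le_of_integral_sub_sq_le (by linarith) hg₁.intervalIntegrable
    (hsq₁ _) (hsq₁ _) hleft
  rw [hρdef]
  exact integral_sub_sub_sq_sub_integral_sub_sq_le hρ₁.le hg₁.intervalIntegrable (hsq₁ _)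
    (hsq₁ _) hmean

/-- Under the hypothesis `F(α) ≥ F(γ)` on the coincidence of the step function,
shifting the left value down by `ρ₁ > 0` increases the fidelity on `(α,γ)` by at
most `ρ₁(ρ₁+ρ)(γ-α)`, where `ρ = g(β) - g(α) > 0`. -/
theorem fidelity_shift_bound (α β : ℝ) (hαβ : α < β) (g : ℝ → ℝ)
    (hg : ContinuousOn g (Set.Icc α β)) (ρ : ℝ) (hρdef : ρ = g β - g α) (hρpos : 0 < ρ)
    (γ : ℝ) (hγ : γ ∈ Set.Icc α β)
    (hF : (∫ x in α..γ, (g α - g x) ^ 2) + (∫ x in γ..β, (g β - g x) ^ 2)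
        ≤ ∫ x in α..β, (g β - g x) ^ 2)
    (ρ₁ : ℝ) (hρ₁ : 0 < ρ₁) :
    (∫ x in α..γ, (g α - ρ₁ - g x) ^ 2) - (∫ x in α..γ, (g α - g x) ^ 2)
      ≤ ρ₁ * (ρ₁ + ρ) * (γ - α) :=
  fidelity_shift_bound_general α β g hg ρ hρdef hρpos γ hγ hF ρ₁ hρ₁
end

section
/- Let α < β be real numbers and let g : [α,β] → ℝ be continuous and nondecreasing. Then a point γ₀ ∈ [α,β] satisfies F(γ₀) = min_{γ∈[α,β]} F(γ) if and only if g(γ₀) = (g(α) + g(β))/2. -/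
/-!
By the fundamental theorem of calculus, the fidelity `F` is differentiable on `[α, β]` with
`F'(γ) = (g α - g γ)² - (g β - g γ)² = (g β - g α) * (2 g γ - (g α + g β))`.
Since `g` is nondecreasing, when `g γ₀` is the midpoint value `F'` is `≤ 0` left of `γ₀` and
`≥ 0` right of it, so `γ₀` is a minimum. Conversely, at a minimum the one-sided first-order
conditions give `F'(γ₀) ≥ 0` if `γ₀ < β` and `F'(γ₀) ≤ 0` if `α < γ₀`; with
`g α ≤ g γ₀ ≤ g β` they force `2 g γ₀ = g α + g β`, also at the endpoints, where
`F'(α) = -(g β - g α)²` and `F'(β) = (g β - g α)²`.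
-/

open Set intervalIntegral

theorem IsLocalMinOn.nonneg_of_hasDerivWithinAt_Icc {f : ℝ → ℝ} {f' a b x : ℝ}
    (hmin : IsLocalMinOn f (Icc a b) x) (hf : HasDerivWithinAt f f' (Icc a b) x)
    (hx : x ∈ Ico a b) : 0 ≤ f' := by
  have hcone : b - x ∈ posTangentConeAt (Icc a b) x :=
    sub_mem_posTangentConeAt_of_segment_subset
      ((convex_Icc a b).segment_subset (Ico_subset_Icc_self hx)
        (right_mem_Icc.2 (hx.1.trans hx.2.le)))
  have := hmin.hasFDerivWithinAt_nonneg hf hcone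
  rw [ContinuousLinearMap.toSpanSingleton_apply, smul_eq_mul] at this
  exact nonneg_of_mul_nonneg_right this (sub_pos.2 hx.2)

theorem IsLocalMinOn.nonpos_of_hasDerivWithinAt_Icc {f : ℝ → ℝ} {f' a b x : ℝ}
    (hmin : IsLocalMinOn f (Icc a b) x) (hf : HasDerivWithinAt f f' (Icc a b) x)
    (hx : x ∈ Ioc a b) : f' ≤ 0 := by
  have hcone : a - x ∈ posTangentConeAt (Icc a b) x :=
    sub_mem_posTangentConeAt_of_segment_subset
      ((convex_Icc a b).segment_subset (Ioc_subset_Icc_self hx)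
        (left_mem_Icc.2 (hx.1.le.trans hx.2)))
  have := hmin.hasFDerivWithinAt_nonneg hf hcone
  rw [ContinuousLinearMap.toSpanSingleton_apply, smul_eq_mul] at this
  exact nonpos_of_mul_nonneg_right this (sub_neg.2 hx.1)

theorem isMinOn_Icc_of_hasDerivWithinAt {f f' : ℝ → ℝ} {a b x₀ : ℝ}
    (hf : ∀ x ∈ Icc a b, HasDerivWithinAt f (f' x) (Icc a b) x) (hx₀ : x₀ ∈ Icc a b)
    (hleft : ∀ x ∈ Ioo a x₀, f' x ≤ 0) (hright : ∀ x ∈ Ioo x₀ b, 0 ≤ f' x) :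
    IsMinOn f (Icc a b) x₀ := by
  have hcont : ContinuousOn f (Icc a b) := fun x hx => (hf x hx).continuousWithinAt
  have hanti : AntitoneOn f (Icc a x₀) := by
    refine antitoneOn_of_hasDerivWithinAt_nonpos (f' := f') (convex_Icc a x₀)
      (hcont.mono (Icc_subset_Icc_right hx₀.2)) (fun x hx => ?_)
      (fun x hx => hleft x (by rwa [interior_Icc] at hx))
    rw [interior_Icc] at hx ⊢
    exact (hf x ⟨hx.1.le, hx.2.le.trans hx₀.2⟩).mono (Ioo_subset_Icc_self.trans
      (Icc_subset_Icc_right hx₀.2))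
  have hmono : MonotoneOn f (Icc x₀ b) := by
    refine monotoneOn_of_hasDerivWithinAt_nonneg (f' := f') (convex_Icc x₀ b)
      (hcont.mono (Icc_subset_Icc_left hx₀.1)) (fun x hx => ?_)
      (fun x hx => hright x (by rwa [interior_Icc] at hx))
    rw [interior_Icc] at hx ⊢
    exact (hf x ⟨hx₀.1.trans hx.1.le, hx.2.le⟩).mono (Ioo_subset_Icc_self.trans
      (Icc_subset_Icc_left hx₀.1))
  intro x hx
  rcases le_total x x₀ with hxx₀ | hx₀x
  · exact hanti ⟨hx.1, hxx₀⟩ ⟨hx₀.1, le_rfl⟩ hxx₀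
  · exact hmono ⟨le_rfl, hx₀.2⟩ ⟨hx₀x, hx.2⟩ hx₀x

theorem hasDerivWithinAt_integral_add_integral {f₁ f₂ : ℝ → ℝ} {a b γ : ℝ}
    (h₁ : ContinuousOn f₁ (Icc a b)) (h₂ : ContinuousOn f₂ (Icc a b)) (hγ : γ ∈ Icc a b) :
    HasDerivWithinAt (fun t => (∫ x in a..t, f₁ x) + ∫ x in t..b, f₂ x) (f₁ γ - f₂ γ)
      (Icc a b) γ := by
  have : Fact (γ ∈ Icc a b) := ⟨hγ⟩
  rw [sub_eq_add_neg]
  exact (integral_hasDerivWithinAt_right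
      ((h₁.mono (uIcc_subset_Icc (left_mem_Icc.2 (hγ.1.trans hγ.2)) hγ)).intervalIntegrable)
      (h₁.stronglyMeasurableAtFilter_nhdsWithin measurableSet_Icc γ) (h₁ γ hγ)).add
    (integral_hasDerivWithinAt_left
      ((h₂.mono (uIcc_subset_Icc hγ (right_mem_Icc.2 (hγ.1.trans hγ.2)))).intervalIntegrable)
      (h₂.stronglyMeasurableAtFilter_nhdsWithin measurableSet_Icc γ) (h₂ γ hγ))

/-- For a continuous nondecreasing `g` on `[α,β]`, the fidelity
`F(γ) = ∫_α^γ (g(α)-g)² + ∫_γ^β (g(β)-g)²` is minimized at `γ₀ ∈ [α,β]` if and only if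
`g(γ₀) = (g(α)+g(β))/2`. -/
theorem fidelity_min_iff_midpoint (α β : ℝ) (hαβ : α < β) (g : ℝ → ℝ)
    (hg : ContinuousOn g (Set.Icc α β)) (hmono : MonotoneOn g (Set.Icc α β))
    (γ₀ : ℝ) (hγ₀ : γ₀ ∈ Set.Icc α β) :
    (∀ γ ∈ Set.Icc α β,
        (∫ x in α..γ₀, (g α - g x) ^ 2) + (∫ x in γ₀..β, (g β - g x) ^ 2)
          ≤ (∫ x in α..γ, (g α - g x) ^ 2) + (∫ x in γ..β, (g β - g x) ^ 2))
      ↔ g γ₀ = (g α + g β) / 2 := by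
  have hα : α ∈ Icc α β := left_mem_Icc.2 hαβ.le
  have hβ : β ∈ Icc α β := right_mem_Icc.2 hαβ.le
  set F := fun t => (∫ x in α..t, (g α - g x) ^ 2) + ∫ x in t..β, (g β - g x) ^ 2
  have hF : ∀ γ ∈ Icc α β,
      HasDerivWithinAt F ((g β - g α) * (2 * g γ - (g α + g β))) (Icc α β) γ := fun γ hγ => by
    convert hasDerivWithinAt_integral_add_integral (f₁ := fun x => (g α - g x) ^ 2)
      (f₂ := fun x => (g β - g x) ^ 2) ((continuousOn_const.sub hg).pow 2)
      ((continuousOn_const.sub hg).pow 2) hγ using 1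
    ring
  have hαβg : 0 ≤ g β - g α := sub_nonneg.2 (hmono hα hβ hαβ.le)
  change (∀ γ ∈ Icc α β, F γ₀ ≤ F γ) ↔ _
  rw [← isMinOn_iff]
  constructor
  · intro hmin
    have hright : γ₀ < β → 0 ≤ (g β - g α) * (2 * g γ₀ - (g α + g β)) := fun h =>
      hmin.localize.nonneg_of_hasDerivWithinAt_Icc (hF γ₀ hγ₀) ⟨hγ₀.1, h⟩
    have hleft : α < γ₀ → (g β - g α) * (2 * g γ₀ - (g α + g β)) ≤ 0 := fun h =>
      hmin.localize.nonpos_of_hasDerivWithinAt_Icc (hF γ₀ hγ₀) ⟨h, hγ₀.2⟩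
    have hlo := hmono hα hγ₀ hγ₀.1
    have hhi := hmono hγ₀ hβ hγ₀.2
    rcases hγ₀.1.eq_or_lt with rfl | hαγ₀
    · nlinarith [hright hαβ]
    rcases hγ₀.2.eq_or_lt with rfl | hγ₀β
    · nlinarith [hleft hαβ]
    nlinarith [hright hγ₀β, hleft hαγ₀]
  · intro hmid
    refine isMinOn_Icc_of_hasDerivWithinAt hF hγ₀ (fun x hx => ?_) (fun x hx => ?_)
    · have := hmono ⟨hx.1.le, hx.2.le.trans hγ₀.2⟩ hγ₀ hx.2.le
      exact mul_nonpos_of_nonneg_of_nonpos hαβg (by linarith)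
    · have := hmono hγ₀ ⟨hγ₀.1.trans hx.1.le, hx.2.le⟩ hx.1.le
      exact mul_nonneg hαβg (by linarith)
end

section
/- Let α < β be real numbers, let g : [α,β] → ℝ be continuous and strictly increasing, set ρ = g(β) − g(α), and let δ ∈ (0,1). Let γ ∈ [α,β] be a point with g(γ) = (g(α) + g(β))/2, and let U₀ : [α,β] → ℝ be the step function with U₀(x) = g(α) for x ∈ [α,γ) and U₀(x) = g(β) for x ∈ [γ,β]. Let x₁, x₂ satisfy α ≤ x₁ ≤ x₂ ≤ β and let v : [α,β] → ℝ be the step function with v(x) = g(α) for x ∈ [α,x₁), v(x) = g(α) + δρ for x ∈ [x₁,x₂), and v(x) = g(β) for x ∈ [x₂,β]. Then ∫_α^β (U₀(x) − g(x))² dx − ∫_α^β (v(x) − g(x))² dx ≤ δ(1−δ)·ρ²·(β−α). -/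
open MeasureTheory Set

set_option maxHeartbeats 1600000 in
/-- For strictly increasing continuous data `g` on `[α,β]` with `ρ = g(β)-g(α)` and
`δ ∈ (0,1)`, the fidelity of the optimal one-jump step function `U₀` (whose jump is
at a midpoint value `γ` of `g`) exceeds the fidelity of any two-jump competitor `v`
taking values `g(α)`, `g(α)+δρ`, `g(β)` by at most `δ(1-δ)ρ²(β-α)`. -/
theorem fidelity_two_jump_bound (α β : ℝ) (hαβ : α < β) (g : ℝ → ℝ)
    (hg : ContinuousOn g (Set.Icc α β)) (hmono : StrictMonoOn g (Set.Icc α β))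
    (ρ : ℝ) (hρdef : ρ = g β - g α) (δ : ℝ) (hδ : δ ∈ Set.Ioo (0 : ℝ) 1)
    (γ : ℝ) (hγ : γ ∈ Set.Icc α β) (hmid : g γ = (g α + g β) / 2)
    (U₀ : ℝ → ℝ) (hU₀ : ∀ x, U₀ x = if x < γ then g α else g β)
    (x₁ x₂ : ℝ) (hx₁ : α ≤ x₁) (hx₁₂ : x₁ ≤ x₂) (hx₂ : x₂ ≤ β)
    (v : ℝ → ℝ)
    (hv : ∀ x, v x = if x < x₁ then g α else if x < x₂ then g α + δ * ρ else g β) :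
    (∫ x in α..β, (U₀ x - g x) ^ 2) - (∫ x in α..β, (v x - g x) ^ 2)
      ≤ δ * (1 - δ) * ρ ^ 2 * (β - α) := by
  obtain ⟨hδ0, hδ1⟩ := hδ
  have hαmem : α ∈ Set.Icc α β := Set.left_mem_Icc.2 hαβ.le
  have hβmem : β ∈ Set.Icc α β := Set.right_mem_Icc.2 hαβ.le
  have hρ : 0 < ρ := by
    rw [hρdef]; have := hmono hαmem hβmem hαβ; linarith
  have hmonoOn := hmono.monotoneOn
  -- measurability of g on the restricted measure
  have hgAE : AEStronglyMeasurable g (volume.restrict (Set.Ioc α β)) := by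
    have h : AEStronglyMeasurable g (volume.restrict (Set.Icc α β)) :=
      hg.aestronglyMeasurable measurableSet_Icc
    exact h.mono_measure (Measure.restrict_mono Set.Ioc_subset_Icc_self le_rfl)
  have hUm : Measurable U₀ := by
    have : U₀ = fun x => if x < γ then g α else g β := funext hU₀
    rw [this]
    exact Measurable.ite (measurableSet_lt measurable_id measurable_const)
      measurable_const measurable_const
  have hvm : Measurable v := by
    have : v = fun x => if x < x₁ then g α else if x < x₂ then g α + δ * ρ else g β :=
      funext hv
    rw [this]
    exact Measurable.ite (measurableSet_lt measurable_id measurable_const)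
      measurable_const
      (Measurable.ite (measurableSet_lt measurable_id measurable_const)
        measurable_const measurable_const)
  -- generic integrability helper
  have key : ∀ F : ℝ → ℝ, AEStronglyMeasurable F (volume.restrict (Set.Ioc α β)) →
      (∀ x ∈ Set.Icc α β, |F x| ≤ ρ ^ 2) → IntervalIntegrable F volume α β := by
    intro F hFm hFb
    rw [intervalIntegrable_iff_integrableOn_Ioc_of_le hαβ.le]
    refine ⟨hFm, HasFiniteIntegral.restrict_of_bounded (C := ρ ^ 2) measure_Ioc_lt_top ?_⟩
    filter_upwards [ae_restrict_mem measurableSet_Ioc] with x hx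
    exact hFb x (Set.Ioc_subset_Icc_self hx)
  -- bounds on g, U₀, v on [α,β]
  have hgb : ∀ x ∈ Set.Icc α β, g α ≤ g x ∧ g x ≤ g β := fun x hx =>
    ⟨hmonoOn hαmem hx hx.1, hmonoOn hx hβmem hx.2⟩
  have hUint : IntervalIntegrable (fun x => (U₀ x - g x) ^ 2) volume α β := by
    apply key
    · have h : AEStronglyMeasurable (fun x => U₀ x - g x) (volume.restrict (Set.Ioc α β)) :=
        hUm.aestronglyMeasurable.restrict.sub hgAE
      simpa [pow_two, Pi.mul_def] using h.mul h
    · intro x hx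
      obtain ⟨h1, h2⟩ := hgb x hx
      rw [abs_of_nonneg (sq_nonneg _), hU₀]
      by_cases hc : x < γ <;> simp only [hc, if_true, if_false] <;> nlinarith
  have hvint : IntervalIntegrable (fun x => (v x - g x) ^ 2) volume α β := by
    apply key
    · have h : AEStronglyMeasurable (fun x => v x - g x) (volume.restrict (Set.Ioc α β)) :=
        hvm.aestronglyMeasurable.restrict.sub hgAE
      simpa [pow_two, Pi.mul_def] using h.mul h
    · intro x hx
      obtain ⟨h1, h2⟩ := hgb x hx
      rw [abs_of_nonneg (sq_nonneg _), hv]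
      have hδρ := mul_pos hδ0 hρ
      have h1δρ : δ * ρ < ρ := by nlinarith
      by_cases ha : x < x₁ <;> by_cases hb : x < x₂ <;>
        simp only [ha, hb, if_true, if_false] <;>
        nlinarith [mul_nonneg (by linarith : (0:ℝ) ≤ ρ - δ * ρ + (g x - g α))
          (by linarith [hρdef] : (0:ℝ) ≤ ρ + δ * ρ - (g x - g α))]
  -- pointwise inequality
  have hpt : ∀ x ∈ Set.Icc α β,
      (U₀ x - g x) ^ 2 - (v x - g x) ^ 2 ≤ δ * (1 - δ) * ρ ^ 2 := by
    intro x hx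
    obtain ⟨h1, h2⟩ := hgb x hx
    rw [hU₀, hv]
    by_cases hxγ : x < γ
    · have hm : g x ≤ (g α + g β) / 2 := by
        rw [← hmid]; exact (hmono hx hγ hxγ).le
      simp only [hxγ, if_true]
      by_cases ha : x < x₁
      · simp only [ha, if_true]
        nlinarith [mul_pos hδ0 hρ, mul_pos (mul_pos hδ0 (by linarith : (0:ℝ) < 1 - δ)) (mul_pos hρ hρ)]
      · by_cases hb : x < x₂
        · simp only [ha, hb, if_true, if_false]
          nlinarith [mul_pos hδ0 hρ, mul_nonneg (mul_pos hδ0 hρ).le (by linarith : (0:ℝ) ≤ (g α + g β) / 2 - g x)]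
        · simp only [ha, hb, if_false]
          nlinarith [mul_nonneg hρ.le (by linarith : (0:ℝ) ≤ g α + g β - 2 * g x),
            mul_pos (mul_pos hδ0 (by linarith : (0:ℝ) < 1 - δ)) (mul_pos hρ hρ)]
    · have hm : (g α + g β) / 2 ≤ g x := by
        rw [← hmid]; exact hmonoOn hγ hx (not_lt.1 hxγ)
      simp only [hxγ, if_false]
      by_cases ha : x < x₁
      · simp only [ha, if_true]
        nlinarith [mul_nonneg hρ.le (by linarith : (0:ℝ) ≤ 2 * g x - g α - g β),
          mul_pos (mul_pos hδ0 (by linarith : (0:ℝ) < 1 - δ)) (mul_pos hρ hρ)]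
      · by_cases hb : x < x₂
        · simp only [ha, hb, if_true, if_false]
          nlinarith [mul_pos hδ0 hρ, mul_nonneg (mul_pos (by linarith : (0:ℝ) < 1 - δ) hρ).le
            (by linarith : (0:ℝ) ≤ g x - (g α + g β) / 2)]
        · simp only [ha, hb, if_false]
          nlinarith [mul_pos (mul_pos hδ0 (by linarith : (0:ℝ) < 1 - δ)) (mul_pos hρ hρ)]
  rw [← intervalIntegral.integral_sub hUint hvint]
  calc (∫ x in α..β, ((U₀ x - g x) ^ 2 - (v x - g x) ^ 2))
      ≤ ∫ _x in α..β, δ * (1 - δ) * ρ ^ 2 :=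
        intervalIntegral.integral_mono_on hαβ.le (hUint.sub hvint)
          intervalIntegrable_const hpt
    _ = δ * (1 - δ) * ρ ^ 2 * (β - α) := by
        rw [intervalIntegral.integral_const, smul_eq_mul]; ring
end

section
/- Let K : [0,∞) → [0,∞), M > 0 and C > 0 satisfy K(ρ₁) + K(ρ₂) ≥ K(ρ₁+ρ₂) + C·ρ₁·ρ₂ for all ρ₁, ρ₂ ≥ 0 with ρ₁ + ρ₂ ≤ M. Let α < β be real numbers, let λ > 0, and assume C* := C − (β−α)·λ/2 > 0. Let g : [α,β] → ℝ be continuous and nondecreasing with ρ := g(β) − g(α) ≤ M, let δ ∈ (0,1), let γ ∈ [α,β] be a point with g(γ) = (g(α)+g(β))/2, and let U₀ : [α,β] → ℝ be the step function with U₀(x) = g(α) for x ∈ [α,γ) and U₀(x) = g(β) for x ∈ [γ,β]. Then, for every pair x₁, x₂ with α ≤ x₁ ≤ x₂ ≤ β and v : [α,β] → ℝ defined by v(x) = g(α) for x ∈ [α,x₁), v(x) = g(α) + δρ for x ∈ [x₁,x₂), v(x) = g(β) for x ∈ [x₂,β], one has K(δρ) + K((1−δ)ρ) + (λ/2)·∫_α^β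 (v(x) − g(x))² dx ≥ K(ρ) + (λ/2)·∫_α^β (U₀(x) − g(x))² dx + C*·δ(1−δ)·ρ². -/
/-!
(K2) applied to the split `ρ = δρ + (1-δ)ρ` gives the excess `C δ(1-δ)ρ²` in the `K`-part.
For the fidelity term, at each `x` the one-jump function `U₀` takes whichever of `g α`, `g β`
is nearer to `g x` (this is where `g γ` being the midpoint enters), while by the variance identity
`(1-δ)(a-y)² + δ(b-y)² = (a+δ(b-a)-y)² + δ(1-δ)(b-a)²` the intermediate value `g α + δρ` of `v`
can be nearer by at most `δ(1-δ)ρ²` in squared distance. Integrating over `[α, β]` loses at most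
`(β-α) λ/2 · δ(1-δ)ρ²` of the excess.
-/

open MeasureTheory Set

lemma min_sq_sub_le_sq_sub_convex (a b y t : ℝ) (ht₀ : 0 ≤ t) (ht₁ : t ≤ 1) :
    min ((a - y) ^ 2) ((b - y) ^ 2) ≤ (a + t * (b - a) - y) ^ 2 + t * (1 - t) * (b - a) ^ 2 := by
  set m := min ((a - y) ^ 2) ((b - y) ^ 2)
  have hconvex : m ≤ (1 - t) * (a - y) ^ 2 + t * (b - y) ^ 2 := by
    nlinarith [mul_le_mul_of_nonneg_left (min_le_left _ _ : m ≤ (a - y) ^ 2) (sub_nonneg.2 ht₁),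
      mul_le_mul_of_nonneg_left (min_le_right _ _ : m ≤ (b - y) ^ 2) ht₀]
  calc m ≤ (1 - t) * (a - y) ^ 2 + t * (b - y) ^ 2 := hconvex
    _ = (a + t * (b - a) - y) ^ 2 + t * (1 - t) * (b - a) ^ 2 := by ring

lemma min_sq_sub_le_sq_sub_two_jump {a b y t w : ℝ} (ht₀ : 0 ≤ t) (ht₁ : t ≤ 1)
    (hw : w = a ∨ w = a + t * (b - a) ∨ w = b) :
    min ((a - y) ^ 2) ((b - y) ^ 2) ≤ (w - y) ^ 2 + t * (1 - t) * (b - a) ^ 2 := by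
  have hgap : 0 ≤ t * (1 - t) * (b - a) ^ 2 := by
    have : 0 ≤ 1 - t := sub_nonneg.2 ht₁
    positivity
  rcases hw with rfl | rfl | rfl
  · linarith [min_le_left ((w - y) ^ 2) ((b - y) ^ 2)]
  · exact min_sq_sub_le_sq_sub_convex a b y t ht₀ ht₁
  · linarith [min_le_right ((a - y) ^ 2) ((w - y) ^ 2)]

lemma sq_sub_left_le_of_le_midpoint {a b y : ℝ} (hab : a ≤ b) (hy : y ≤ (a + b) / 2) :
    (a - y) ^ 2 ≤ (b - y) ^ 2 := by
  nlinarith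

lemma sq_sub_right_le_of_midpoint_le {a b y : ℝ} (hab : a ≤ b) (hy : (a + b) / 2 ≤ y) :
    (b - y) ^ 2 ≤ (a - y) ^ 2 := by
  nlinarith

lemma sq_step_sub_eq_min {g : ℝ → ℝ} {α β γ x : ℝ} (hmono : MonotoneOn g (Icc α β))
    (hγ : γ ∈ Icc α β) (hmid : g γ = (g α + g β) / 2) (hx : x ∈ Icc α β) :
    ((if x < γ then g α else g β) - g x) ^ 2 = min ((g α - g x) ^ 2) ((g β - g x) ^ 2) := by
  have hαβ : α ≤ β := hx.1.trans hx.2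
  have hgαβ : g α ≤ g β := hmono (left_mem_Icc.2 hαβ) (right_mem_Icc.2 hαβ) hαβ
  split_ifs with hxγ
  · have hle : g x ≤ (g α + g β) / 2 := hmid ▸ hmono hx hγ hxγ.le
    exact (min_eq_left (sq_sub_left_le_of_le_midpoint hgαβ hle)).symm
  · have hge : (g α + g β) / 2 ≤ g x := hmid ▸ hmono hγ hx (not_lt.1 hxγ)
    exact (min_eq_right (sq_sub_right_le_of_midpoint_le hgαβ hge)).symm

lemma measurable_ite_lt {E : Type*} [MeasurableSpace E] {f h : ℝ → E} (c : ℝ)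
    (hf : Measurable f) (hh : Measurable h) : Measurable fun x => if x < c then f x else h x :=
  Measurable.ite (measurableSet_lt measurable_id measurable_const) hf hh

lemma intervalIntegrable_sq_sub_of_mem_Icc {a b : ℝ} {w g : ℝ → ℝ} (hab : a ≤ b)
    (hw : Measurable w) (hg : MonotoneOn g (Icc a b))
    (hwg : ∀ x ∈ Icc a b, w x ∈ Icc (g a) (g b)) :
    IntervalIntegrable (fun x => (w x - g x) ^ 2) volume a b := by
  have hg_meas : AEStronglyMeasurable g (volume.restrict (Ioc a b)) :=
    (MonotoneOn.intervalIntegrable (by rwa [uIcc_of_le hab])).1.aestronglyMeasurable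
  rw [intervalIntegrable_iff_integrableOn_Ioc_of_le hab]
  refine IntegrableOn.of_bound measure_Ioc_lt_top ((hw.aestronglyMeasurable.sub hg_meas).pow 2)
    ((g b - g a) ^ 2) ?_
  filter_upwards [ae_restrict_mem measurableSet_Ioc] with x hx
  have hx' : x ∈ Icc a b := Ioc_subset_Icc_self hx
  obtain ⟨hwa, hwb⟩ := hwg x hx'
  have hga : g a ≤ g x := hg (left_mem_Icc.2 hab) hx' hx'.1
  have hgb : g x ≤ g b := hg hx' (right_mem_Icc.2 hab) hx'.2
  rw [norm_pow, Real.norm_eq_abs, sq_abs]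
  exact sq_le_sq' (by linarith) (by linarith)

lemma intervalIntegral_le_add_mul_of_le_add {a b c : ℝ} {f h : ℝ → ℝ} (hab : a ≤ b)
    (hf : IntervalIntegrable f volume a b) (hh : IntervalIntegrable h volume a b)
    (hfh : ∀ x ∈ Icc a b, f x ≤ h x + c) :
    ∫ x in a..b, f x ≤ (∫ x in a..b, h x) + (b - a) * c := by
  have hmono := intervalIntegral.integral_mono_on hab hf (hh.add intervalIntegrable_const) hfh
  rwa [intervalIntegral.integral_add hh intervalIntegrable_const,
    intervalIntegral.integral_const, smul_eq_mul] at hmono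

theorem energy_two_jump_excess_general (K : ℝ → ℝ) (M C : ℝ)
    (hK2 : ∀ ρ₁ ρ₂ : ℝ, 0 ≤ ρ₁ → 0 ≤ ρ₂ → ρ₁ + ρ₂ ≤ M →
      K ρ₁ + K ρ₂ ≥ K (ρ₁ + ρ₂) + C * ρ₁ * ρ₂)
    (α β lam : ℝ) (hαβ : α < β) (hlam : 0 < lam)
    (g : ℝ → ℝ) (hmono : MonotoneOn g (Set.Icc α β))
    (ρ : ℝ) (hρdef : ρ = g β - g α) (hρM : ρ ≤ M)
    (δ : ℝ) (hδ : δ ∈ Set.Ioo (0 : ℝ) 1)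
    (γ : ℝ) (hγ : γ ∈ Set.Icc α β) (hmid : g γ = (g α + g β) / 2)
    (U₀ : ℝ → ℝ) (hU₀ : ∀ x, U₀ x = if x < γ then g α else g β)
    (x₁ x₂ : ℝ)
    (v : ℝ → ℝ)
    (hv : ∀ x, v x = if x < x₁ then g α else if x < x₂ then g α + δ * ρ else g β) :
    K (δ * ρ) + K ((1 - δ) * ρ) + lam / 2 * ∫ x in α..β, (v x - g x) ^ 2
      ≥ K ρ + lam / 2 * (∫ x in α..β, (U₀ x - g x) ^ 2)
          + (C - (β - α) * lam / 2) * (δ * (1 - δ)) * ρ ^ 2 := by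
  obtain ⟨hδ₀, hδ₁⟩ := hδ
  subst hρdef
  have hgαβ : g α ≤ g β := hmono (left_mem_Icc.2 hαβ.le) (right_mem_Icc.2 hαβ.le) hαβ.le
  have hK : K (g β - g α) + C * (δ * (g β - g α)) * ((1 - δ) * (g β - g α))
      ≤ K (δ * (g β - g α)) + K ((1 - δ) * (g β - g α)) := by
    have h := hK2 (δ * (g β - g α)) ((1 - δ) * (g β - g α)) (by nlinarith) (by nlinarith)
      (by linarith)
    rwa [← add_mul, add_sub_cancel, one_mul] at h
  have hv_vals : ∀ x, v x = g α ∨ v x = g α + δ * (g β - g α) ∨ v x = g β := by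
    intro x; rw [hv x]; split_ifs <;> simp
  have hvg : ∀ x ∈ Icc α β, v x ∈ Icc (g α) (g β) := by
    intro x _; rcases hv_vals x with h | h | h <;> rw [h] <;> constructor <;> nlinarith
  have hUg : ∀ x ∈ Icc α β, U₀ x ∈ Icc (g α) (g β) := by
    intro x _; rw [hU₀ x]; split_ifs <;> constructor <;> linarith
  have hv_meas : Measurable v := by
    rw [funext hv]
    exact measurable_ite_lt x₁ measurable_const
      (measurable_ite_lt x₂ measurable_const measurable_const)
  have hU_meas : Measurable U₀ := by
    rw [funext hU₀]
    exact measurable_ite_lt γ measurable_const measurable_const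
  have hpointwise : ∀ x ∈ Icc α β,
      (U₀ x - g x) ^ 2 ≤ (v x - g x) ^ 2 + δ * (1 - δ) * (g β - g α) ^ 2 := by
    intro x hx
    rw [hU₀, sq_step_sub_eq_min hmono hγ hmid hx]
    exact min_sq_sub_le_sq_sub_two_jump hδ₀.le hδ₁.le (hv_vals x)
  have hintegral := intervalIntegral_le_add_mul_of_le_add hαβ.le
    (intervalIntegrable_sq_sub_of_mem_Icc hαβ.le hU_meas hmono hUg)
    (intervalIntegrable_sq_sub_of_mem_Icc hαβ.le hv_meas hmono hvg) hpointwise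
  nlinarith [mul_le_mul_of_nonneg_left hintegral (by positivity : (0 : ℝ) ≤ lam / 2)]

/-- Quantitative energy comparison (Lemma on two-jump competitors): under (K2) at level
`M` with constant `C`, for nondecreasing continuous data `g` with `ρ = g(β)-g(α) ≤ M`
and `C* = C - (β-α)λ/2 > 0`, the total energy `TV_{Kg}` of any nondecreasing two-jump
competitor `v` with middle value `g(α)+δρ` exceeds that of the optimal one-jump step
function `U₀` by at least `C*·δ(1-δ)ρ²`. -/
theorem energy_two_jump_excess (K : ℝ → ℝ) (M C : ℝ) (hM : 0 < M) (hC : 0 < C)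
    (hK2 : ∀ ρ₁ ρ₂ : ℝ, 0 ≤ ρ₁ → 0 ≤ ρ₂ → ρ₁ + ρ₂ ≤ M →
      K ρ₁ + K ρ₂ ≥ K (ρ₁ + ρ₂) + C * ρ₁ * ρ₂)
    (α β lam : ℝ) (hαβ : α < β) (hlam : 0 < lam)
    (hCstar : 0 < C - (β - α) * lam / 2)
    (g : ℝ → ℝ) (hg : ContinuousOn g (Set.Icc α β)) (hmono : MonotoneOn g (Set.Icc α β))
    (ρ : ℝ) (hρdef : ρ = g β - g α) (hρM : ρ ≤ M)
    (δ : ℝ) (hδ : δ ∈ Set.Ioo (0 : ℝ) 1)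
    (γ : ℝ) (hγ : γ ∈ Set.Icc α β) (hmid : g γ = (g α + g β) / 2)
    (U₀ : ℝ → ℝ) (hU₀ : ∀ x, U₀ x = if x < γ then g α else g β)
    (x₁ x₂ : ℝ) (hx₁ : α ≤ x₁) (hx₁₂ : x₁ ≤ x₂) (hx₂ : x₂ ≤ β)
    (v : ℝ → ℝ)
    (hv : ∀ x, v x = if x < x₁ then g α else if x < x₂ then g α + δ * ρ else g β) :
    K (δ * ρ) + K ((1 - δ) * ρ) + lam / 2 * ∫ x in α..β, (v x - g x) ^ 2
      ≥ K ρ + lam / 2 * (∫ x in α..β, (U₀ x - g x) ^ 2)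
          + (C - (β - α) * lam / 2) * (δ * (1 - δ)) * ρ ^ 2 :=
  energy_two_jump_excess_general K M C hK2 α β lam hαβ hlam g hmono ρ hρdef hρM δ hδ γ hγ hmid U₀
    hU₀ x₁ x₂ v hv
end

section
/- For each k ∈ ℕ let (ρ_iᵏ)_{i∈ℕ} be a sequence of nonnegative real numbers which is nonincreasing in i and has only finitely many nonzero terms. Assume s_k := Σ_{i∈ℕ} ρ_iᵏ converges to some s > 0, and that for each i the limit ρ_i := lim_{k→∞} ρ_iᵏ exists. Set s_I := Σ_{i∈ℕ} ρ_i (which satisfies s_I ≤ s). Then liminf_{k→∞} Σ_{i<j} ρ_iᵏ ρ_jᵏ ≥ ( s_I² − Σ_{i∈ℕ} ρ_i² + (s − s_I)² ) / 2. -/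
/-! Since `ρᵏ` has finite support, `Σ_{i<j} ρᵢᵏ ρⱼᵏ = (s_k² - Σᵢ (ρᵢᵏ)²) / 2`. Monotonicity in `i`
bounds the tail of the squares, `Σᵢ (ρᵢᵏ)² ≤ Σ_{i<N} (ρᵢᵏ)² + ρ_Nᵏ s_k`, so the liminf is at least
`(s² - Σ_{i<N} ρᵢ² - ρ_N s) / 2` for every `N`. By Fatou `Σᵢ ρᵢ ≤ s`, hence `ρ_N → 0`, and letting
`N → ∞` gives the bound `(s² - Σᵢ ρᵢ²) / 2`, which dominates the claim because
`s_I² + (s - s_I)² ≤ s²` for `0 ≤ s_I ≤ s`. -/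

open Filter Topology Finset

theorem Finset.two_mul_sum_ite_lt_mul {ι R : Type*} [LinearOrder ι] [CommRing R]
    (s : Finset ι) (a : ι → R) :
    2 * ∑ p ∈ s ×ˢ s, (if p.1 < p.2 then a p.1 * a p.2 else 0)
      = (∑ i ∈ s, a i) ^ 2 - ∑ i ∈ s, a i ^ 2 := by
  have hsplit : ∀ p : ι × ι, a p.1 * a p.2 = (if p.1 < p.2 then a p.1 * a p.2 else 0)
      + (if p.2 < p.1 then a p.1 * a p.2 else 0) + (if p.1 = p.2 then a p.1 * a p.2 else 0) := by
    intro p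
    rcases lt_trichotomy p.1 p.2 with h | h | h
    · simp [h, h.not_gt, h.ne]
    · simp [h]
    · simp [h, h.not_gt, h.ne']
  have hswap : ∑ p ∈ s ×ˢ s, (if p.2 < p.1 then a p.1 * a p.2 else 0)
      = ∑ p ∈ s ×ˢ s, (if p.1 < p.2 then a p.1 * a p.2 else 0) :=
    sum_equiv (Equiv.prodComm ι ι) (by simp [and_comm]) (by simp [mul_comm])
  have hdiag : ∑ p ∈ s ×ˢ s, (if p.1 = p.2 then a p.1 * a p.2 else 0) = ∑ i ∈ s, a i ^ 2 := by
    rw [sum_product]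
    exact sum_congr rfl fun i hi => by simp [hi, sq]
  have hsq : (∑ i ∈ s, a i) ^ 2 = ∑ p ∈ s ×ˢ s, a p.1 * a p.2 := by
    rw [sq, sum_mul_sum, sum_product]
  rw [hsq, sum_congr rfl fun p _ => hsplit p, sum_add_distrib, sum_add_distrib, hswap, hdiag]
  ring

theorem tsum_ite_lt_mul_eq {ι : Type*} [LinearOrder ι] {a : ι → ℝ}
    (ha : (Function.support a).Finite) :
    ∑' p : ι × ι, (if p.1 < p.2 then a p.1 * a p.2 else 0)
      = ((∑' i, a i) ^ 2 - ∑' i, a i ^ 2) / 2 := by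
  set t := ha.toFinset
  have hzero : ∀ i ∉ t, a i = 0 := fun i hi => by simpa [t] using hi
  rw [tsum_eq_sum (s := t ×ˢ t), tsum_eq_sum hzero, tsum_eq_sum (fun i hi => by simp [hzero i hi]),
    eq_div_iff two_ne_zero, mul_comm, two_mul_sum_ite_lt_mul]
  intro p hp
  rcases not_and_or.1 (mem_product.not.1 hp) with h | h <;> simp [hzero _ h]

section Fatou

variable {κ ι : Type*} {l : Filter κ} [l.NeBot] {f : κ → ι → ℝ} {g : ι → ℝ} {s : ℝ}

theorem sum_le_of_tendsto_tsum (hf_nn : ∀ k i, 0 ≤ f k i) (hf : ∀ k, Summable (f k))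
    (hsum : Tendsto (fun k => ∑' i, f k i) l (𝓝 s)) (hlim : ∀ i, Tendsto (f · i) l (𝓝 (g i)))
    (u : Finset ι) : ∑ i ∈ u, g i ≤ s :=
  le_of_tendsto_of_tendsto (tendsto_finsetSum u fun i _ => hlim i) hsum <|
    Eventually.of_forall fun k => (hf k).sum_le_tsum u fun i _ => hf_nn k i

theorem summable_of_tendsto_tsum (hf_nn : ∀ k i, 0 ≤ f k i) (hf : ∀ k, Summable (f k))
    (hsum : Tendsto (fun k => ∑' i, f k i) l (𝓝 s)) (hlim : ∀ i, Tendsto (f · i) l (𝓝 (g i))) :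
    Summable g :=
  summable_of_sum_le (fun i => ge_of_tendsto' (hlim i) fun k => hf_nn k i)
    (sum_le_of_tendsto_tsum hf_nn hf hsum hlim)

theorem tsum_le_of_tendsto_tsum (hf_nn : ∀ k i, 0 ≤ f k i) (hf : ∀ k, Summable (f k))
    (hsum : Tendsto (fun k => ∑' i, f k i) l (𝓝 s)) (hlim : ∀ i, Tendsto (f · i) l (𝓝 (g i))) :
    ∑' i, g i ≤ s :=
  Real.tsum_le_of_sum_le (fun i => ge_of_tendsto' (hlim i) fun k => hf_nn k i)
    (sum_le_of_tendsto_tsum hf_nn hf hsum hlim)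

end Fatou

theorem le_liminf_of_tendsto_of_le {α ι β : Type*} [ConditionallyCompleteLinearOrder β]
    [TopologicalSpace β] [OrderTopology β] {f : Filter α} [f.NeBot] {g : Filter ι} [g.NeBot]
    {u : α → β} {v : ι → α → β} {L : ι → β} {ℓ : β} (hu : IsCoboundedUnder (· ≥ ·) f u)
    (hvu : ∀ n, v n ≤ᶠ[f] u) (hv : ∀ n, Tendsto (v n) f (𝓝 (L n))) (hL : Tendsto L g (𝓝 ℓ)) :
    ℓ ≤ liminf u f :=
  le_of_tendsto' hL fun n =>
    (hv n).liminf_eq ▸ liminf_le_liminf (hvu n) (hv n).isBoundedUnder_ge hu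

theorem Antitone.summable_sq {a : ℕ → ℝ} (ha : Antitone a) (ha_nn : 0 ≤ a) (hs : Summable a) :
    Summable (a · ^ 2) :=
  (hs.mul_left (a 0)).of_nonneg_of_le (fun i => sq_nonneg _) fun i => by
    rw [sq]; exact mul_le_mul_of_nonneg_right (ha i.zero_le) (ha_nn i)

theorem Antitone.tsum_sq_le_sum_add_mul_tsum {a : ℕ → ℝ} (ha : Antitone a) (ha_nn : 0 ≤ a)
    (hs : Summable a) (N : ℕ) : ∑' i, a i ^ 2 ≤ ∑ i ∈ range N, a i ^ 2 + a N * ∑' i, a i := by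
  have htail : ∑' i, a (i + N) ^ 2 ≤ a N * ∑' i, a (i + N) := by
    rw [← tsum_mul_left]
    refine ((summable_nat_add_iff N).2 (ha.summable_sq ha_nn hs)).tsum_le_tsum (fun i => ?_)
      (((summable_nat_add_iff N).2 hs).mul_left _)
    rw [sq]; exact mul_le_mul_of_nonneg_right (ha (N.le_add_left i)) (ha_nn _)
  have hhead : 0 ≤ ∑ i ∈ range N, a i := sum_nonneg fun i _ => ha_nn i
  rw [← (ha.summable_sq ha_nn hs).sum_add_tsum_nat_add N, ← hs.sum_add_tsum_nat_add N]
  linarith [mul_nonneg (ha_nn N) hhead]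

theorem le_liminf_sq_tsum_sub_tsum_sq {κ : Type*} {l : Filter κ} [l.NeBot] {f : κ → ℕ → ℝ}
    {g : ℕ → ℝ} {s : ℝ} (hf_nn : ∀ k i, 0 ≤ f k i) (hf_anti : ∀ k, Antitone (f k))
    (hf : ∀ k, Summable (f k)) (hsum : Tendsto (fun k => ∑' i, f k i) l (𝓝 s))
    (hlim : ∀ i, Tendsto (f · i) l (𝓝 (g i))) :
    (s ^ 2 - ∑' i, g i ^ 2) / 2 ≤
      liminf (fun k => ((∑' i, f k i) ^ 2 - ∑' i, f k i ^ 2) / 2) l := by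
  have hg_nn : 0 ≤ g := fun i => ge_of_tendsto' (hlim i) fun k => hf_nn k i
  have hg_anti : Antitone g := fun i j hij =>
    le_of_tendsto_of_tendsto' (hlim j) (hlim i) fun k => hf_anti k hij
  have hg := summable_of_tendsto_tsum hf_nn hf hsum hlim
  have hbdd : IsCoboundedUnder (· ≥ ·) l fun k => ((∑' i, f k i) ^ 2 - ∑' i, f k i ^ 2) / 2 :=
    IsBoundedUnder.isCoboundedUnder_ge <| ((hsum.pow 2).div_const 2).isBoundedUnder_le.mono_le <|
      Eventually.of_forall fun k => by
        have : 0 ≤ ∑' i, f k i ^ 2 := tsum_nonneg fun i => sq_nonneg _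
        dsimp only; linarith
  refine le_liminf_of_tendsto_of_le (g := atTop) hbdd
    (v := fun N k => ((∑' i, f k i) ^ 2 - (∑ i ∈ range N, f k i ^ 2 + f k N * ∑' i, f k i)) / 2)
    (L := fun N => (s ^ 2 - (∑ i ∈ range N, g i ^ 2 + g N * s)) / 2)
    (fun N => Eventually.of_forall fun k => ?_) (fun N => ?_) ?_
  · dsimp only
    linarith [(hf_anti k).tsum_sq_le_sum_add_mul_tsum (hf_nn k) (hf k) N]
  · exact ((hsum.pow 2).sub ((tendsto_finsetSum _ fun i _ => (hlim i).pow 2).add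
      ((hlim N).mul hsum))).div_const 2
  · have hsq := (hg_anti.summable_sq hg_nn hg).hasSum.tendsto_sum_nat
    simpa using ((tendsto_const_nhds (x := s ^ 2)).sub
      (hsq.add (hg.tendsto_atTop_zero.mul_const s))).div_const 2

theorem pair_sum_liminf_lower_bound_general (ρ : ℕ → ℕ → ℝ)
    (hnn : ∀ k i, 0 ≤ ρ k i)
    (hanti : ∀ k, Antitone (ρ k))
    (hfin : ∀ k, ∃ N : ℕ, ∀ i ≥ N, ρ k i = 0)
    (s : ℝ)
    (hsum : Tendsto (fun k => ∑' i : ℕ, ρ k i) atTop (nhds s))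
    (ρl : ℕ → ℝ) (hlim : ∀ i, Tendsto (fun k => ρ k i) atTop (nhds (ρl i))) :
    ((∑' i : ℕ, ρl i) ^ 2 - (∑' i : ℕ, (ρl i) ^ 2) + (s - ∑' i : ℕ, ρl i) ^ 2) / 2
      ≤ liminf
          (fun k => ∑' p : ℕ × ℕ, if p.1 < p.2 then ρ k p.1 * ρ k p.2 else 0)
          atTop := by
  have hsupp : ∀ k, (Function.support (ρ k)).Finite := fun k => by
    obtain ⟨N, hN⟩ := hfin k
    exact (Set.finite_lt_nat N).subset fun i hi => not_le.1 fun h => hi (hN i h)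
  have hsumm : ∀ k, Summable (ρ k) := fun k => summable_of_hasFiniteSupport (hsupp k)
  have hsI_nn : 0 ≤ ∑' i, ρl i := tsum_nonneg fun i => ge_of_tendsto' (hlim i) fun k => hnn k i
  have hsI_le : ∑' i, ρl i ≤ s := tsum_le_of_tendsto_tsum hnn hsumm hsum hlim
  simp_rw [tsum_ite_lt_mul_eq (hsupp _)]
  refine le_trans ?_ (le_liminf_sq_tsum_sub_tsum_sq hnn hanti hsumm hsum hlim)
  nlinarith [mul_nonneg hsI_nn (sub_nonneg.2 hsI_le)]

/-- Fatou-type lower bound for pair sums: if each `(ρᵢᵏ)ᵢ` is a nonincreasing,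
finitely supported family of nonnegative reals with `Σᵢ ρᵢᵏ → s > 0` and pointwise
limits `ρᵢᵏ → ρᵢ`, then with `s_I = Σᵢ ρᵢ`,
`liminf_k Σ_{i<j} ρᵢᵏ ρⱼᵏ ≥ (s_I² − Σᵢ ρᵢ² + (s − s_I)²)/2`. -/
theorem pair_sum_liminf_lower_bound (ρ : ℕ → ℕ → ℝ)
    (hnn : ∀ k i, 0 ≤ ρ k i)
    (hanti : ∀ k, Antitone (ρ k))
    (hfin : ∀ k, ∃ N : ℕ, ∀ i ≥ N, ρ k i = 0)
    (s : ℝ) (hs : 0 < s)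
    (hsum : Tendsto (fun k => ∑' i : ℕ, ρ k i) atTop (nhds s))
    (ρl : ℕ → ℝ) (hlim : ∀ i, Tendsto (fun k => ρ k i) atTop (nhds (ρl i))) :
    ((∑' i : ℕ, ρl i) ^ 2 - (∑' i : ℕ, (ρl i) ^ 2) + (s - ∑' i : ℕ, ρl i) ^ 2) / 2
      ≤ liminf
          (fun k => ∑' p : ℕ × ℕ, if p.1 < p.2 then ρ k p.1 * ρ k p.2 else 0)
          atTop :=
  pair_sum_liminf_lower_bound_general ρ hnn hanti hfin s hsum ρl hlim
end

section
/- Let K : [0,∞) → [0,∞) satisfy lim_{ρ→0⁺} K(ρ)/ρ = 1. Let a < b and let u : [a,b] → ℝ be continuous with finite total variation V on [a,b]. Then for every ε > 0 there exist N ∈ ℕ, a partition a = t₀ < t₁ < ⋯ < t_N = b and real numbers c₁, …, c_N such that |u(x) − c_i| ≤ ε for all x ∈ [t_{i−1}, t_i) and each i = 1, …, N, |u(b) − c_N| ≤ ε, and | Σ_{i=1}^{N−1} K(|c_{i+1} − c_i|) − V | ≤ ε. -/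
open Filter

lemma pca_tele (f : ℕ → ℝ) : ∀ k i, i ≤ k → |f k - f i| ≤ ∑ j ∈ Finset.Ico i k, |f (j+1) - f j| := by
  intro k
  induction k with
  | zero =>
    intro i hi
    obtain rfl : i = 0 := Nat.le_zero.mp hi
    simp
  | succ k ih =>
    intro i hi
    rcases eq_or_lt_of_le hi with rfl | h
    · simp
    · have hik : i ≤ k := Nat.lt_succ_iff.mp h
      rw [Finset.sum_Ico_succ_top hik]
      have h1 := abs_sub_le (f (k+1)) (f k) (f i)
      have h2 := ih i hik
      linarith

lemma pca_subseq (f : ℕ → ℝ) (σ : ℕ → ℕ) (hσ : Monotone σ) (n : ℕ) :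
    ∑ m ∈ Finset.range n, |f (σ (m+1)) - f (σ m)| ≤ ∑ j ∈ Finset.Ico (σ 0) (σ n), |f (j+1) - f j| := by
  induction n with
  | zero => simp
  | succ n ih =>
    rw [Finset.sum_range_succ,
      ← Finset.sum_Ico_consecutive _ (hσ (Nat.zero_le n)) (hσ (Nat.le_succ n))]
    exact add_le_add ih (pca_tele f _ _ (hσ (Nat.le_succ n)))

set_option maxHeartbeats 2000000 in
/-- Approximation of a continuous BV function by piecewise constant functions so that
the `TV_K` energy approximates the total variation `V`. -/
theorem piecewise_constant_approximation (K : ℝ → ℝ)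
    (hKnn : ∀ ρ : ℝ, 0 ≤ ρ → 0 ≤ K ρ)
    (hK3 : Tendsto (fun ρ => K ρ / ρ) (nhdsWithin 0 (Set.Ioi 0)) (nhds 1))
    (a b : ℝ) (hab : a < b) (u : ℝ → ℝ) (hu : ContinuousOn u (Set.Icc a b))
    (V : ℝ) (hV0 : 0 ≤ V)
    (hV : eVariationOn u (Set.Icc a b) = ENNReal.ofReal V)
    (ε : ℝ) (hε : 0 < ε) :
    ∃ N : ℕ, 0 < N ∧ ∃ t c : ℕ → ℝ,
      t 0 = a ∧ t N = b ∧ (∀ i < N, t i < t (i + 1)) ∧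
      (∀ i < N, ∀ x ∈ Set.Ico (t i) (t (i + 1)), |u x - c i| ≤ ε) ∧
      |u b - c (N - 1)| ≤ ε ∧
      |(∑ i ∈ Finset.range (N - 1), K |c (i + 1) - c i|) - V| ≤ ε := by
  have hba : (0:ℝ) < b - a := by linarith
  -- step 1: δ₀ and r from hK3
  set δ₀ : ℝ := ε / (4 * (V + 2)) with hδ₀def
  have hδ₀ : 0 < δ₀ := by positivity
  obtain ⟨r, hr, hKr⟩ : ∃ r > 0, ∀ ρ : ℝ, 0 < ρ → ρ ≤ r → |K ρ - ρ| ≤ δ₀ * ρ := by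
    rw [Metric.tendsto_nhdsWithin_nhds] at hK3
    obtain ⟨r', hr', h⟩ := hK3 δ₀ hδ₀
    refine ⟨r' / 2, by linarith, fun ρ hρ hρr => ?_⟩
    have hdd : dist ρ (0:ℝ) < r' := by
      rw [Real.dist_eq, sub_zero, abs_of_pos hρ]; linarith
    have h2 := h (Set.mem_Ioi.mpr hρ) hdd
    rw [Real.dist_eq] at h2
    have hne : ρ ≠ 0 := ne_of_gt hρ
    have heq : K ρ - ρ = ρ * (K ρ / ρ - 1) := by field_simp
    rw [heq, abs_mul, abs_of_pos hρ, mul_comm δ₀ ρ]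
    exact mul_le_mul_of_nonneg_left h2.le hρ.le
  -- step 2: modulus of continuity
  set ω : ℝ := min (ε / 4) (r / 2) with hωdef
  have hω : 0 < ω := lt_min (by linarith) (by linarith)
  have hωε : ω ≤ ε / 4 := min_le_left _ _
  have hωr : ω ≤ r / 2 := min_le_right _ _
  obtain ⟨d, hd, hUC⟩ : ∃ d > 0, ∀ x ∈ Set.Icc a b, ∀ y ∈ Set.Icc a b,
      dist x y < d → dist (u x) (u y) < ω := by
    have h := (isCompact_Icc (a := a) (b := b)).uniformContinuousOn_of_continuous hu
    rw [Metric.uniformContinuousOn_iff] at h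
    obtain ⟨d, hd, h⟩ := h ω hω
    exact ⟨d, hd, fun x hx y hy hxy => h x hx y hy hxy⟩
  -- step 3: a good partition q
  obtain ⟨n, q, hq_mono, hq_mem, hq_sum⟩ : ∃ n : ℕ, ∃ q : ℕ → ℝ, Monotone q ∧
      (∀ i, q i ∈ Set.Icc a b) ∧ V - ε/4 ≤ ∑ m ∈ Finset.range n, |u (q (m+1)) - u (q m)| := by
    rcases le_or_gt V (ε/4) with hVε | hVε
    · exact ⟨0, fun _ => a, monotone_const, fun i => ⟨le_refl a, hab.le⟩, by simp; linarith⟩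
    · have hlt : ENNReal.ofReal (V - ε/4) < eVariationOn u (Set.Icc a b) := by
        rw [hV]
        exact (ENNReal.ofReal_lt_ofReal_iff (by linarith)).mpr (by linarith)
      rw [eVariationOn] at hlt
      obtain ⟨⟨n, ⟨q, hq_mono, hq_mem⟩⟩, hq⟩ := lt_iSup_iff.mp hlt
      refine ⟨n, q, hq_mono, hq_mem, ?_⟩
      have heq : (∑ i ∈ Finset.range n, edist (u (q (i+1))) (u (q i)))
          = ENNReal.ofReal (∑ i ∈ Finset.range n, |u (q (i+1)) - u (q i)|) := by
        rw [ENNReal.ofReal_sum_of_nonneg (fun i _ => abs_nonneg _)]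
        exact Finset.sum_congr rfl fun i _ => by rw [edist_dist, Real.dist_eq]
      rw [heq] at hq
      have := (ENNReal.ofReal_lt_ofReal_iff_of_nonneg (by linarith)).mp hq
      linarith
  -- step 4: the grid parameter
  set M : ℕ := ⌈(b - a) / d⌉₊ + 1 with hMdef
  have hM0 : (0:ℝ) < M := by positivity
  have hMd : (b - a) / M < d := by
    have h1 : (b - a) / d < M := by
      have := Nat.le_ceil ((b - a) / d)
      push_cast [hMdef]
      linarith
    rw [div_lt_iff₀ hM0]
    rw [div_lt_iff₀ hd] at h1
    linarith
  -- step 5: the finset F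
  set F : Finset ℝ := ({a, b} : Finset ℝ) ∪ (Finset.range (n+1)).image q
      ∪ (Finset.range (M+1)).image (fun j : ℕ => a + j * (b - a) / M) with hFdef
  have haF : a ∈ F := by simp [hFdef]
  have hbF : b ∈ F := by simp [hFdef]
  have hF_sub : ∀ x ∈ F, x ∈ Set.Icc a b := by
    intro x hx
    simp only [hFdef, Finset.mem_union, Finset.mem_image, Finset.mem_insert,
      Finset.mem_singleton, Finset.mem_range] at hx
    rcases hx with (h | ⟨j, hj, rfl⟩) | ⟨j, hj, rfl⟩
    · rcases h with rfl | rfl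
      · exact ⟨le_refl x, hab.le⟩
      · exact ⟨hab.le, le_refl x⟩
    · exact hq_mem j
    · constructor
      · have : (0:ℝ) ≤ j * (b-a)/M := by positivity
        linarith
      · have hjM : (j:ℝ) ≤ M := by exact_mod_cast Nat.lt_succ_iff.mp hj
        have h2 : (j:ℝ) * (b-a)/M ≤ b - a := by
          rw [div_le_iff₀ hM0]; nlinarith
        linarith
  have hk2 : 1 < F.card := Finset.one_lt_card.mpr ⟨a, haF, b, hbF, hab.ne⟩
  set Nn : ℕ := F.card - 1 with hNdef
  have hN : 0 < Nn := by omega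
  have hltk : ∀ i : ℕ, min i Nn < F.card := fun i =>
    lt_of_le_of_lt (min_le_right i Nn) (by omega)
  set e := F.orderEmbOfFin rfl with hedef
  set t : ℕ → ℝ := fun i => e ⟨min i Nn, hltk i⟩ with htdef
  have ht_mem : ∀ i, t i ∈ Set.Icc a b := fun i => hF_sub _ (F.orderEmbOfFin_mem rfl _)
  have ht_mono : Monotone t := by
    intro i j hij
    simp only [htdef]
    exact e.monotone (Fin.mk_le_mk.mpr (min_le_min_right Nn hij))
  have ht_strict : ∀ i < Nn, t i < t (i+1) := by
    intro i hi
    simp only [htdef]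
    apply e.strictMono
    rw [Fin.mk_lt_mk, min_eq_left (by omega), min_eq_left (by omega)]
    omega
  have ht0 : t 0 = a := by
    have h0 : t 0 = F.min' ⟨a, haF⟩ := by
      simp only [htdef]
      rw [show (⟨min 0 Nn, hltk 0⟩ : Fin F.card) = ⟨0, by omega⟩ by simp]
      exact Finset.orderEmbOfFin_zero rfl (by omega)
    rw [h0]
    exact le_antisymm (Finset.min'_le F a haF)
      (Finset.le_min' _ _ _ fun x hx => (hF_sub x hx).1)
  have htN : t Nn = b := by
    have h0 : t Nn = F.max' ⟨a, haF⟩ := by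
      simp only [htdef]
      rw [show (⟨min Nn Nn, hltk Nn⟩ : Fin F.card) = ⟨F.card - 1, by omega⟩ by
        simp [hNdef]]
      exact Finset.orderEmbOfFin_last rfl (by omega)
    rw [h0]
    exact le_antisymm (Finset.max'_le _ _ _ fun x hx => (hF_sub x hx).2)
      (Finset.le_max' F b hbF)
  have hnb : ∀ i < Nn, ∀ z ∈ F, ¬ (t i < z ∧ z < t (i+1)) := by
    intro i hi z hz ⟨h1, h2⟩
    have hz' : z ∈ Set.range e := by rw [hedef, Finset.range_orderEmbOfFin]; exact hz
    obtain ⟨j, rfl⟩ := hz'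
    simp only [htdef] at h1 h2
    have hj1 : (⟨min i Nn, hltk i⟩ : Fin F.card) < j := e.strictMono.lt_iff_lt.mp h1
    have hj2 : j < (⟨min (i+1) Nn, hltk (i+1)⟩ : Fin F.card) := e.strictMono.lt_iff_lt.mp h2
    rw [Fin.lt_def] at hj1 hj2
    simp only [min_eq_left (show i ≤ Nn by omega), min_eq_left (show i+1 ≤ Nn by omega)] at hj1 hj2
    omega
  have hmesh : ∀ i < Nn, t (i+1) - t i ≤ (b - a)/M := by
    intro i hi
    by_contra hcon
    push_neg at hcon
    set s : ℝ := (t i - a) * M / (b - a) with hsdef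
    have hs0 : 0 ≤ s := by
      have := (ht_mem i).1
      have : 0 ≤ t i - a := by linarith
      positivity
    set j : ℕ := ⌊s⌋₊ + 1 with hjdef
    have hjs : s < j := by
      push_cast [hjdef]
      exact Nat.lt_floor_add_one s
    have hjs' : (j:ℝ) ≤ s + 1 := by
      push_cast [hjdef]
      linarith [Nat.floor_le hs0]
    have hseq : s * ((b-a)/M) = t i - a := by
      rw [hsdef]; field_simp
    have hg1 : t i < a + j * (b - a)/M := by
      have h3 : s * ((b-a)/M) < j * ((b-a)/M) :=
        mul_lt_mul_of_pos_right hjs (by positivity)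
      rw [hseq] at h3
      have : (j:ℝ) * ((b-a)/M) = j * (b-a)/M := by ring
      linarith
    have hg2 : a + j * (b - a)/M < t (i+1) := by
      have h3 : (j:ℝ) * ((b-a)/M) ≤ (s+1) * ((b-a)/M) :=
        mul_le_mul_of_nonneg_right hjs' (by positivity)
      have h4 : (s+1) * ((b-a)/M) = (t i - a) + (b-a)/M := by
        rw [add_mul, hseq]; ring
      have : (j:ℝ) * ((b-a)/M) = j * (b-a)/M := by ring
      linarith
    have hjM : j < M + 1 := by
      by_contra hj2
      push_neg at hj2
      have hjM' : (M:ℝ) + 1 ≤ j := by exact_mod_cast hj2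
      have hMeq : (M:ℝ) * ((b-a)/M) = b - a := by field_simp
      have hb2 := (ht_mem (i+1)).2
      nlinarith [hba, hM0]
    have hgF : a + j * (b - a)/M ∈ F := by
      simp only [hFdef, Finset.mem_union, Finset.mem_image, Finset.mem_range]
      right
      exact ⟨j, hjM, rfl⟩
    exact hnb i hi _ hgF ⟨hg1, hg2⟩
  have hjump : ∀ i < Nn, |u (t (i+1)) - u (t i)| < ω := by
    intro i hi
    have hdist : dist (t (i+1)) (t i) < d := by
      rw [Real.dist_eq, abs_of_nonneg (by linarith [ht_strict i hi])]
      linarith [hmesh i hi]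
    have h1 := hUC (t (i+1)) (ht_mem _) (t i) (ht_mem _) hdist
    rwa [Real.dist_eq] at h1
  -- the total-variation sum over t
  set g : ℕ → ℝ := fun i => |u (t (i+1)) - u (t i)| with hgdef
  set St : ℝ := ∑ i ∈ Finset.range Nn, g i with hStdef
  have hSt_le : St ≤ V := by
    have h1 := eVariationOn.sum_le (f := u) (n := Nn) ht_mono ht_mem
    rw [hV] at h1
    have h2 : (∑ i ∈ Finset.range Nn, edist (u (t (i+1))) (u (t i))) = ENNReal.ofReal St := by
      rw [hStdef, ENNReal.ofReal_sum_of_nonneg (fun i _ => abs_nonneg _)]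
      exact Finset.sum_congr rfl fun i _ => by rw [edist_dist, Real.dist_eq]
    rw [h2] at h1
    exact (ENNReal.ofReal_le_ofReal_iff hV0).mp h1
  have hSt_ge : V - ε/4 ≤ St := by
    have hqF : ∀ m : ℕ, q (min m n) ∈ F := by
      intro m
      simp only [hFdef, Finset.mem_union, Finset.mem_image, Finset.mem_range]
      left; right
      exact ⟨min m n, by omega, rfl⟩
    set σ : ℕ → ℕ := fun m => ((F.orderIsoOfFin rfl).symm ⟨q (min m n), hqF m⟩ : Fin F.card).val
      with hσdef
    have hσle : ∀ m, σ m ≤ Nn := by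
      intro m
      have := ((F.orderIsoOfFin rfl).symm ⟨q (min m n), hqF m⟩).isLt
      simp only [hσdef]
      omega
    have hσt : ∀ m, t (σ m) = q (min m n) := by
      intro m
      simp only [htdef]
      have heq2 : (⟨min (σ m) Nn, hltk (σ m)⟩ : Fin F.card)
          = (F.orderIsoOfFin rfl).symm ⟨q (min m n), hqF m⟩ := by
        apply Fin.ext
        simp only [min_eq_left (hσle m), hσdef]
        exact min_eq_left (hσle m)
      rw [heq2, hedef, ← Finset.coe_orderIsoOfFin_apply, OrderIso.apply_symm_apply]
    have hσmono : Monotone σ := by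
      intro m m' h
      have hq' : q (min m n) ≤ q (min m' n) := hq_mono (by omega)
      have h2 : (F.orderIsoOfFin rfl).symm ⟨q (min m n), hqF m⟩
          ≤ (F.orderIsoOfFin rfl).symm ⟨q (min m' n), hqF m'⟩ :=
        (F.orderIsoOfFin rfl).symm.monotone (Subtype.mk_le_mk.mpr hq')
      rw [Fin.le_def] at h2
      simpa only [hσdef] using h2
    have key : ∑ m ∈ Finset.range n, |u (q (m+1)) - u (q m)| ≤ St := by
      have h1 : ∀ m ∈ Finset.range n, |u (q (m+1)) - u (q m)|
          = |(u ∘ t) (σ (m+1)) - (u ∘ t) (σ m)| := by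
        intro m hm
        rw [Finset.mem_range] at hm
        simp only [Function.comp_apply]
        rw [hσt, hσt, min_eq_left (by omega), min_eq_left (by omega)]
      rw [Finset.sum_congr rfl h1]
      calc ∑ m ∈ Finset.range n, |(u ∘ t) (σ (m+1)) - (u ∘ t) (σ m)|
          ≤ ∑ j ∈ Finset.Ico (σ 0) (σ n), |(u ∘ t) (j+1) - (u ∘ t) j| :=
            pca_subseq _ σ hσmono n
        _ ≤ St := by
            rw [hStdef]
            apply Finset.sum_le_sum_of_subset_of_nonneg
            · intro j hj
              rw [Finset.mem_Ico] at hj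
              rw [Finset.mem_range]
              have := hσle n
              omega
            · intro _ _ _; exact abs_nonneg _
    linarith
  -- step 6: choose η
  set B : Finset ℝ := (Finset.range Nn).image (fun i => u (t i) - u (t (i+1))) with hBdef
  set η₀ : ℝ := min (min (r/2) (1/(Nn+1))) (ε/(4*(Nn+1))) with hη₀def
  have hNn1 : (0:ℝ) < (Nn:ℝ) + 1 := by positivity
  have hη₀ : 0 < η₀ := lt_min (lt_min (by linarith) (by positivity)) (by positivity)
  obtain ⟨η, hη⟩ : ∃ η, η ∈ Set.Ioo (0:ℝ) η₀ \ ↑B :=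
    ((Set.Ioo_infinite hη₀).diff B.finite_toSet).nonempty
  obtain ⟨⟨hη1, hη2⟩, hηB⟩ := hη
  have hηr : η ≤ r/2 := le_trans hη2.le (le_trans (min_le_left _ _) (min_le_left _ _))
  have hηε : η * ((Nn:ℝ)+1) ≤ ε/4 := by
    have h1 : η ≤ ε/(4*((Nn:ℝ)+1)) := le_trans hη2.le (min_le_right _ _)
    have h2 : η * ((Nn:ℝ)+1) ≤ ε/(4*((Nn:ℝ)+1)) * ((Nn:ℝ)+1) := mul_le_mul_of_nonneg_right h1 (le_of_lt hNn1)
    have h3 : ε/(4*((Nn:ℝ)+1)) * ((Nn:ℝ)+1) = ε/4 := by field_simp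
    linarith
  have hη1' : η * ((Nn:ℝ)+1) ≤ 1 := by
    have h1 : η ≤ 1/((Nn:ℝ)+1) := le_trans hη2.le (le_trans (min_le_left _ _) (min_le_right _ _))
    have h2 : η * ((Nn:ℝ)+1) ≤ 1/((Nn:ℝ)+1) * ((Nn:ℝ)+1) := mul_le_mul_of_nonneg_right h1 (le_of_lt hNn1)
    have h3 : (1:ℝ)/((Nn:ℝ)+1) * ((Nn:ℝ)+1) = 1 := by field_simp
    linarith
  set c : ℕ → ℝ := fun i => u (t i) + η * i with hcdef
  refine ⟨Nn, hN, t, c, ht0, htN, ht_strict, ?_, ?_, ?_⟩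
  · -- approximation on intervals
    intro i hi x hx
    have hti : a ≤ t i := by rw [← ht0]; exact ht_mono (Nat.zero_le i)
    have hti1 : t (i+1) ≤ b := by rw [← htN]; exact ht_mono (by omega)
    have hxI : x ∈ Set.Icc a b := ⟨le_trans hti hx.1, le_trans hx.2.le hti1⟩
    have hdist : dist x (t i) < d := by
      rw [Real.dist_eq, abs_of_nonneg (by linarith [hx.1])]
      have := hmesh i hi
      have := hx.2
      linarith
    have h1 : |u x - u (t i)| < ω := by
      have := hUC x hxI (t i) (ht_mem i) hdist
      rwa [Real.dist_eq] at this
    have hiN : (i:ℝ) ≤ (Nn:ℝ) + 1 := by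
      have : (i:ℝ) ≤ (Nn:ℝ) := by exact_mod_cast hi.le
      linarith
    have h2 : η * i ≤ ε/4 := by nlinarith
    have h3 : 0 ≤ η * i := by positivity
    have h4 : |u x - c i| ≤ |u x - u (t i)| + η * i := by
      rw [hcdef]
      have h5 := abs_add_le (u x - u (t i)) (-(η * i))
      rw [abs_neg, abs_of_nonneg h3] at h5
      calc |u x - (u (t i) + η * i)| = |(u x - u (t i)) + -(η * i)| := by ring_nf
        _ ≤ |u x - u (t i)| + η * i := h5
    linarith
  · -- endpoint
    have hNn1' : Nn - 1 + 1 = Nn := by omega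
    have hj := hjump (Nn-1) (by omega)
    rw [hNn1'] at hj
    have hcast : ((Nn-1 : ℕ):ℝ) ≤ (Nn:ℝ) + 1 := by
      have : ((Nn-1 : ℕ):ℝ) ≤ (Nn:ℝ) := by exact_mod_cast Nat.sub_le Nn 1
      linarith
    have h3 : 0 ≤ η * ((Nn-1:ℕ):ℝ) := by positivity
    have h2 : η * ((Nn-1:ℕ):ℝ) ≤ ε/4 := by nlinarith
    have h4 : |u b - c (Nn-1)| ≤ |u b - u (t (Nn-1))| + η * ((Nn-1:ℕ):ℝ) := by
      rw [hcdef]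
      have h5 := abs_add_le (u b - u (t (Nn-1))) (-(η * ((Nn-1:ℕ):ℝ)))
      rw [abs_neg, abs_of_nonneg h3] at h5
      calc |u b - (u (t (Nn-1)) + η * ((Nn-1:ℕ):ℝ))|
          = |(u b - u (t (Nn-1))) + -(η * ((Nn-1:ℕ):ℝ))| := by ring_nf
        _ ≤ _ := h5
    have h6 : |u b - u (t (Nn-1))| < ω := by rwa [← htN]
    linarith
  · -- the main estimate
    have hρeq : ∀ i : ℕ, c (i+1) - c i = (u (t (i+1)) - u (t i)) + η := by
      intro i
      simp only [hcdef]
      push_cast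
      ring
    have hρ_pos : ∀ i < Nn, 0 < |c (i+1) - c i| := by
      intro i hi
      rw [hρeq, abs_pos]
      intro h0
      apply hηB
      simp only [hBdef, Finset.coe_image, Set.mem_image, Finset.mem_coe, Finset.mem_range]
      exact ⟨i, by simpa using hi, by linarith⟩
    have hρ_le : ∀ i < Nn, |c (i+1) - c i| ≤ r := by
      intro i hi
      rw [hρeq]
      have h1 := abs_add_le (u (t (i+1)) - u (t i)) η
      have h2 := hjump i hi
      rw [abs_of_pos hη1] at h1
      linarith
    have hρg : ∀ i, |(|c (i+1) - c i| - g i)| ≤ η := by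
      intro i
      rw [hρeq, hgdef]
      have h1 := abs_abs_sub_abs_le_abs_sub ((u (t (i+1)) - u (t i)) + η) (u (t (i+1)) - u (t i))
      simp only [add_sub_cancel_left] at h1
      rwa [abs_of_pos hη1] at h1
    set S1 : ℝ := ∑ i ∈ Finset.range (Nn-1), |c (i+1) - c i| with hS1def
    set S2 : ℝ := ∑ i ∈ Finset.range (Nn-1), g i with hS2def
    have h12 : |S1 - S2| ≤ ((Nn:ℝ)) * η := by
      rw [hS1def, hS2def, ← Finset.sum_sub_distrib]
      calc |∑ i ∈ Finset.range (Nn-1), (|c (i+1) - c i| - g i)|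
          ≤ ∑ i ∈ Finset.range (Nn-1), |(|c (i+1) - c i| - g i)| :=
            Finset.abs_sum_le_sum_abs _ _
        _ ≤ ∑ i ∈ Finset.range (Nn-1), η := Finset.sum_le_sum fun i _ => hρg i
        _ = ((Nn-1:ℕ):ℝ) * η := by rw [Finset.sum_const, Finset.card_range]; ring
        _ ≤ ((Nn:ℝ)) * η := by
            have : ((Nn-1:ℕ):ℝ) ≤ (Nn:ℝ) := by exact_mod_cast Nat.sub_le Nn 1
            nlinarith
    have hsplit : St = S2 + g (Nn-1) := by
      rw [hStdef, hS2def, ← Finset.sum_range_succ, Nat.sub_add_cancel hN]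
    have hgN : 0 ≤ g (Nn-1) ∧ g (Nn-1) < ω := by
      constructor
      · exact abs_nonneg _
      · have hNn1' : Nn - 1 + 1 = Nn := by omega
        have := hjump (Nn-1) (by omega)
        rwa [hgdef]
    have hS2_le : S2 ≤ V := by linarith [hgN.1]
    have hS2_ge : V - ε/4 - ω ≤ S2 := by linarith [hgN.2]
    have hS2_nonneg : 0 ≤ S2 := Finset.sum_nonneg fun i _ => abs_nonneg _
    have hS1_le : S1 ≤ V + 1 := by
      have := abs_le.mp h12
      have hNη : (Nn:ℝ) * η ≤ 1 := by nlinarith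
      linarith
    have hS1_nonneg : 0 ≤ S1 := Finset.sum_nonneg fun i _ => abs_nonneg _
    have hKS1 : |(∑ i ∈ Finset.range (Nn-1), K |c (i+1) - c i|) - S1| ≤ δ₀ * S1 := by
      rw [hS1def, ← Finset.sum_sub_distrib]
      calc |∑ i ∈ Finset.range (Nn-1), (K |c (i+1) - c i| - |c (i+1) - c i|)|
          ≤ ∑ i ∈ Finset.range (Nn-1), |(K |c (i+1) - c i| - |c (i+1) - c i|)| :=
            Finset.abs_sum_le_sum_abs _ _
        _ ≤ ∑ i ∈ Finset.range (Nn-1), δ₀ * |c (i+1) - c i| := by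
            apply Finset.sum_le_sum
            intro i hi
            rw [Finset.mem_range] at hi
            exact hKr _ (hρ_pos i (by omega)) (hρ_le i (by omega))
        _ = δ₀ * S1 := by rw [hS1def, Finset.mul_sum]
    have hδS1 : δ₀ * S1 ≤ ε/4 := by
      have h1 : δ₀ * S1 ≤ δ₀ * (V + 2) := by nlinarith
      have h2 : δ₀ * (V + 2) = ε/4 := by
        rw [hδ₀def]; field_simp
      linarith
    have hNη : (Nn:ℝ) * η ≤ ε/4 := by nlinarith
    have hA := abs_le.mp hKS1
    have hB2 := abs_le.mp h12
    rw [abs_le]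
    constructor <;> linarith
end

section
/- Let K : [0,∞) → [0,∞) be continuous, nondecreasing and subadditive (K(ρ₁+ρ₂) ≤ K(ρ₁) + K(ρ₂) for all ρ₁,ρ₂ ≥ 0), with lim_{ρ→0⁺} K(ρ)/ρ = 1. Let a < b and let u : [a,b] → ℝ be nondecreasing and continuous at a and at b. Let D ⊆ (a,b) be the set of discontinuity points of u, and for x ∈ D let j(x) = (right limit of u at x) − (left limit of u at x) > 0. Then ( u(b) − u(a) − Σ_{x∈D} j(x) ) + Σ_{x∈D} K(j(x)) ≥ K( u(b) − u(a) ). -/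
open Filter

/-- Iterated subadditivity: `K ((n+1) c) ≤ (n+1) K c`. -/
private lemma TVK_iter (K : ℝ → ℝ)
    (hsub : ∀ ρ₁ ρ₂ : ℝ, 0 ≤ ρ₁ → 0 ≤ ρ₂ → K (ρ₁ + ρ₂) ≤ K ρ₁ + K ρ₂) :
    ∀ (n : ℕ) (c : ℝ), 0 ≤ c → K (((n : ℝ) + 1) * c) ≤ ((n : ℝ) + 1) * K c := by
  intro n
  induction n with
  | zero => intro c hc; simp
  | succ n ih =>
    intro c hc
    have h1 : ((n + 1 : ℕ) : ℝ) + 1 = ((n : ℝ) + 1) + 1 := by push_cast; ring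
    have h2 : (((n : ℝ) + 1) + 1) * c = ((n : ℝ) + 1) * c + c := by ring
    rw [h1, h2]
    have hnc : 0 ≤ ((n : ℝ) + 1) * c := by positivity
    calc K (((n : ℝ) + 1) * c + c) ≤ K (((n : ℝ) + 1) * c) + K c := hsub _ _ hnc hc
      _ ≤ ((n : ℝ) + 1) * K c + K c := by linarith [ih c hc]
      _ = (((n : ℝ) + 1) + 1) * K c := by ring

/-- `K 0 = 0` follows from continuity at `0` and `K ρ / ρ → 1`. -/
private lemma TVK_zero (K : ℝ → ℝ)
    (hKcont : ContinuousOn K (Set.Ici 0))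
    (hK3 : Tendsto (fun ρ => K ρ / ρ) (nhdsWithin 0 (Set.Ioi 0)) (nhds 1)) :
    K 0 = 0 := by
  have hid : Tendsto (fun ρ : ℝ => ρ) (nhdsWithin (0:ℝ) (Set.Ioi 0)) (nhds 0) :=
    tendsto_id.mono_left nhdsWithin_le_nhds
  have h1 : Tendsto (fun ρ : ℝ => K ρ / ρ * ρ) (nhdsWithin (0:ℝ) (Set.Ioi 0)) (nhds (1 * 0)) :=
    hK3.mul hid
  have h1' : Tendsto K (nhdsWithin (0:ℝ) (Set.Ioi 0)) (nhds 0) := by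
    rw [one_mul] at h1
    refine h1.congr' ?_
    filter_upwards [self_mem_nhdsWithin] with x hx
    exact div_mul_cancel₀ _ (ne_of_gt hx)
  have h2 : Tendsto K (nhdsWithin (0:ℝ) (Set.Ioi 0)) (nhds (K 0)) :=
    (hKcont 0 Set.self_mem_Ici).mono_left (nhdsWithin_mono _ Set.Ioi_subset_Ici_self)
  exact tendsto_nhds_unique h2 h1'

/-- `K ρ ≤ ρ` for `ρ ≥ 0`. -/
private lemma TVK_le_self (K : ℝ → ℝ)
    (hKcont : ContinuousOn K (Set.Ici 0))
    (hsub : ∀ ρ₁ ρ₂ : ℝ, 0 ≤ ρ₁ → 0 ≤ ρ₂ → K (ρ₁ + ρ₂) ≤ K ρ₁ + K ρ₂)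
    (hK3 : Tendsto (fun ρ => K ρ / ρ) (nhdsWithin 0 (Set.Ioi 0)) (nhds 1))
    {ρ : ℝ} (hρ : 0 ≤ ρ) : K ρ ≤ ρ := by
  rcases eq_or_lt_of_le hρ with h | h
  · rw [← h, TVK_zero K hKcont hK3]
  · have hseq : Tendsto (fun n : ℕ => ρ / ((n : ℝ) + 1)) atTop (nhdsWithin (0:ℝ) (Set.Ioi 0)) := by
      apply tendsto_nhdsWithin_of_tendsto_nhds_of_eventually_within
      · have := tendsto_one_div_add_atTop_nhds_zero_nat.const_mul ρ
        simpa [div_eq_mul_inv, mul_comm, mul_assoc, one_div] using this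
      · exact Eventually.of_forall fun n => div_pos h (by positivity)
    have hg : Tendsto (fun n : ℕ => K (ρ / ((n : ℝ) + 1)) / (ρ / ((n : ℝ) + 1))) atTop (nhds 1) :=
      hK3.comp hseq
    have hlim : Tendsto (fun n : ℕ => ρ * (K (ρ / ((n : ℝ) + 1)) / (ρ / ((n : ℝ) + 1))))
        atTop (nhds ρ) := by
      have := hg.const_mul ρ
      simpa using this
    refine ge_of_tendsto' hlim fun n => ?_
    have hn1 : (0:ℝ) < (n : ℝ) + 1 := by positivity
    have hc : (0:ℝ) < ρ / ((n : ℝ) + 1) := div_pos h hn1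
    have hiter := TVK_iter K hsub n (ρ / ((n : ℝ) + 1)) hc.le
    have heq1 : ((n : ℝ) + 1) * (ρ / ((n : ℝ) + 1)) = ρ := by field_simp
    have heq2 : ρ * (K (ρ / ((n : ℝ) + 1)) / (ρ / ((n : ℝ) + 1)))
        = ((n : ℝ) + 1) * K (ρ / ((n : ℝ) + 1)) := by
      field_simp
    rw [heq2]
    calc K ρ = K (((n : ℝ) + 1) * (ρ / ((n : ℝ) + 1))) := by rw [heq1]
      _ ≤ ((n : ℝ) + 1) * K (ρ / ((n : ℝ) + 1)) := hiter

/-- Finite subadditivity for sums of nonnegative terms. -/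
private lemma TVK_finsum_le (K : ℝ → ℝ) (hK0 : K 0 = 0)
    (hsub : ∀ ρ₁ ρ₂ : ℝ, 0 ≤ ρ₁ → 0 ≤ ρ₂ → K (ρ₁ + ρ₂) ≤ K ρ₁ + K ρ₂)
    {ι : Type*} (f : ι → ℝ) (hf : ∀ i, 0 ≤ f i) (F : Finset ι) :
    K (∑ i ∈ F, f i) ≤ ∑ i ∈ F, K (f i) := by
  classical
  induction F using Finset.cons_induction with
  | empty => simp [hK0]
  | cons a s ha ih =>
    rw [Finset.sum_cons, Finset.sum_cons]
    have hs : 0 ≤ ∑ i ∈ s, f i := Finset.sum_nonneg fun i _ => hf i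
    calc K (f a + ∑ i ∈ s, f i) ≤ K (f a) + K (∑ i ∈ s, f i) := hsub _ _ (hf a) hs
      _ ≤ K (f a) + ∑ i ∈ s, K (f i) := by linarith

/-- Sums of jumps of a monotone function are bounded by the total increment. -/
private lemma TVK_jump_sum_le (a b : ℝ) (hab : a < b) (u : ℝ → ℝ)
    (hu : MonotoneOn u (Set.Icc a b)) (F : Finset ℝ) (hF : ∀ x ∈ F, x ∈ Set.Ioo a b) :
    ∑ x ∈ F, (sInf (u '' Set.Ioc x b) - sSup (u '' Set.Ico a x)) ≤ u b - u a := by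
  classical
  set L : ℝ → ℝ := fun x => sSup (u '' Set.Ico a x) with hL
  set R : ℝ → ℝ := fun x => sInf (u '' Set.Ioc x b) with hR
  have hbddA : ∀ {x : ℝ}, x ∈ Set.Ioo a b → BddAbove (u '' Set.Ico a x) := by
    rintro x hx
    refine ⟨u x, ?_⟩
    rintro _ ⟨y, hy, rfl⟩
    exact hu ⟨hy.1, (hy.2.trans hx.2).le⟩ ⟨hx.1.le, hx.2.le⟩ hy.2.le
  have hbddB : ∀ {x : ℝ}, x ∈ Set.Ioo a b → BddBelow (u '' Set.Ioc x b) := by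
    rintro x hx
    refine ⟨u x, ?_⟩
    rintro _ ⟨y, hy, rfl⟩
    exact hu ⟨hx.1.le, hx.2.le⟩ ⟨(hx.1.trans hy.1).le, hy.2⟩ hy.1.le
  have hLa : ∀ {x : ℝ}, x ∈ Set.Ioo a b → u a ≤ L x := fun {x} hx =>
    le_csSup (hbddA hx) ⟨a, ⟨le_refl a, hx.1⟩, rfl⟩
  have hRb : ∀ {x : ℝ}, x ∈ Set.Ioo a b → R x ≤ u b := fun {x} hx =>
    csInf_le (hbddB hx) ⟨b, ⟨hx.2, le_refl b⟩, rfl⟩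
  have hRL : ∀ {x y : ℝ}, x ∈ Set.Ioo a b → y ∈ Set.Ioo a b → x < y → R x ≤ L y := by
    intro x y hx hy hxy
    have hxt : x < (x + y) / 2 := by linarith
    have hty : (x + y) / 2 < y := by linarith
    calc R x ≤ u ((x + y) / 2) :=
          csInf_le (hbddB hx) ⟨(x + y) / 2, ⟨hxt, (hty.trans hy.2).le⟩, rfl⟩
      _ ≤ L y := le_csSup (hbddA hy) ⟨(x + y) / 2, ⟨(hx.1.trans hxt).le, hty⟩, rfl⟩
  have aux : ∀ G : Finset ℝ, (∀ x ∈ G, x ∈ Set.Ioo a b) → ∀ hne : G.Nonempty,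
      ∑ x ∈ G, (R x - L x) ≤ R (G.max' hne) - u a := by
    intro G
    induction G using Finset.strongInduction with
    | _ G ih =>
      intro hG hne
      set m := G.max' hne with hm
      have hmG : m ∈ G := G.max'_mem hne
      have hmx : m ∈ Set.Ioo a b := hG m hmG
      have key : ∑ x ∈ G, (R x - L x) = (R m - L m) + ∑ x ∈ G.erase m, (R x - L x) :=
        (Finset.add_sum_erase G _ hmG).symm
      have hrest : ∑ x ∈ G.erase m, (R x - L x) ≤ L m - u a := by
        rcases (G.erase m).eq_empty_or_nonempty with h0 | hne'
        · rw [h0, Finset.sum_empty]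
          linarith [hLa hmx]
        · set m' := (G.erase m).max' hne' with hm'
          have hm'mem : m' ∈ G.erase m := (G.erase m).max'_mem hne'
          have hm'G : m' ∈ G := Finset.mem_of_mem_erase hm'mem
          have hm'x : m' ∈ Set.Ioo a b := hG m' hm'G
          have hm'lt : m' < m :=
            lt_of_le_of_ne (G.le_max' m' hm'G) (Finset.ne_of_mem_erase hm'mem)
          have hsub' : G.erase m ⊂ G := Finset.erase_ssubset hmG
          have h1 := ih (G.erase m) hsub' (fun x hx => hG x (Finset.mem_of_mem_erase hx)) hne'
          have h2 : R m' ≤ L m := hRL hm'x hmx hm'lt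
          linarith
      linarith [key, hrest]
  rcases F.eq_empty_or_nonempty with h0 | hne
  · rw [h0, Finset.sum_empty]
    have : u a ≤ u b := hu ⟨le_refl a, hab.le⟩ ⟨hab.le, le_refl b⟩ hab.le
    linarith
  · have h1 := aux F hF hne
    have h2 : R (F.max' hne) ≤ u b := hRb (hF _ (F.max'_mem hne))
    calc ∑ x ∈ F, (R x - L x) ≤ R (F.max' hne) - u a := h1
      _ ≤ u b - u a := by linarith

/-- Lower bound `TV_K(u) ≥ K(u(b) − u(a))` for a nondecreasing function `u` on `[a,b]`
continuous at the endpoints: the non-jump part of the variation, measured linearly,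
plus the jumps measured through `K`, dominates `K` of the total increment. -/
theorem TVK_lower_bound_monotone (K : ℝ → ℝ)
    (hKcont : ContinuousOn K (Set.Ici 0))
    (hKmono : MonotoneOn K (Set.Ici 0))
    (hKnn : ∀ ρ : ℝ, 0 ≤ ρ → 0 ≤ K ρ)
    (hsub : ∀ ρ₁ ρ₂ : ℝ, 0 ≤ ρ₁ → 0 ≤ ρ₂ → K (ρ₁ + ρ₂) ≤ K ρ₁ + K ρ₂)
    (hK3 : Tendsto (fun ρ => K ρ / ρ) (nhdsWithin 0 (Set.Ioi 0)) (nhds 1))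
    (a b : ℝ) (hab : a < b) (u : ℝ → ℝ)
    (hu : MonotoneOn u (Set.Icc a b))
    (hua : ContinuousWithinAt u (Set.Icc a b) a)
    (hub : ContinuousWithinAt u (Set.Icc a b) b) :
    K (u b - u a) ≤
      (u b - u a -
          ∑' x : {x : ℝ // x ∈ Set.Ioo a b ∧ ¬ ContinuousWithinAt u (Set.Icc a b) x},
            (sInf (u '' Set.Ioc (x : ℝ) b) - sSup (u '' Set.Ico a (x : ℝ)))) +
        ∑' x : {x : ℝ // x ∈ Set.Ioo a b ∧ ¬ ContinuousWithinAt u (Set.Icc a b) x},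
          K (sInf (u '' Set.Ioc (x : ℝ) b) - sSup (u '' Set.Ico a (x : ℝ))) := by
  classical
  set D := {x : ℝ // x ∈ Set.Ioo a b ∧ ¬ ContinuousWithinAt u (Set.Icc a b) x} with hD
  set J : D → ℝ := fun x => sInf (u '' Set.Ioc (x : ℝ) b) - sSup (u '' Set.Ico a (x : ℝ))
    with hJdef
  have hK0 : K 0 = 0 := TVK_zero K hKcont hK3
  -- each jump is nonnegative
  have hJnn : ∀ x : D, 0 ≤ J x := by
    rintro ⟨x, hx, _⟩
    have hxab : x ∈ Set.Icc a b := ⟨hx.1.le, hx.2.le⟩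
    have h1 : sSup (u '' Set.Ico a x) ≤ u x := by
      refine csSup_le ⟨u a, a, ⟨le_refl a, hx.1⟩, rfl⟩ ?_
      rintro _ ⟨y, hy, rfl⟩
      exact hu ⟨hy.1, (hy.2.trans hx.2).le⟩ hxab hy.2.le
    have h2 : u x ≤ sInf (u '' Set.Ioc x b) := by
      refine le_csInf ⟨u b, b, ⟨hx.2, le_refl b⟩, rfl⟩ ?_
      rintro _ ⟨y, hy, rfl⟩
      exact hu hxab ⟨(hx.1.trans hy.1).le, hy.2⟩ hy.1.le
    simp only [hJdef]
    linarith
  -- finite sums of jumps are bounded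
  have hFsum : ∀ F : Finset D, ∑ x ∈ F, J x ≤ u b - u a := by
    intro F
    have hinj : ∀ x ∈ F, ∀ y ∈ F, (x : ℝ) = (y : ℝ) → x = y := fun x _ y _ h => Subtype.ext h
    have := TVK_jump_sum_le a b hab u hu (F.image Subtype.val) (by
      intro x hx
      rcases Finset.mem_image.1 hx with ⟨y, _, rfl⟩
      exact y.2.1)
    rwa [Finset.sum_image hinj] at this
  have hJsummable : Summable J := summable_of_sum_le hJnn hFsum
  set S := ∑' x : D, J x with hSdef
  have hS_le : S ≤ u b - u a := Summable.tsum_le_of_sum_le hJsummable hFsum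
  have hS_nn : 0 ≤ S := tsum_nonneg hJnn
  have hKle : ∀ ρ : ℝ, 0 ≤ ρ → K ρ ≤ ρ := fun ρ hρ => TVK_le_self K hKcont hsub hK3 hρ
  have hKJsummable : Summable fun x : D => K (J x) :=
    Summable.of_nonneg_of_le (fun x => hKnn _ (hJnn x)) (fun x => hKle _ (hJnn x)) hJsummable
  set T := ∑' x : D, K (J x) with hTdef
  -- K S ≤ T
  have hKS : K S ≤ T := by
    have hS : HasSum J S := hJsummable.hasSum
    have hT : HasSum (fun x : D => K (J x)) T := hKJsummable.hasSum
    have h1 : Tendsto (fun F : Finset D => S - ∑ x ∈ F, J x) atTop (nhds 0) := by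
      have := (tendsto_const_nhds (x := S) (f := atTop (α := Finset D))).sub hS
      simpa using this
    have h1' : Tendsto (fun F : Finset D => S - ∑ x ∈ F, J x) atTop
        (nhdsWithin (0:ℝ) (Set.Ici 0)) := by
      refine tendsto_nhdsWithin_of_tendsto_nhds_of_eventually_within _ h1 ?_
      refine Eventually.of_forall fun F => ?_
      have := Summable.sum_le_tsum F (fun i _ => hJnn i) hJsummable
      simpa [hSdef] using sub_nonneg.2 this
    have h2 : Tendsto (fun F : Finset D => K (S - ∑ x ∈ F, J x)) atTop (nhds 0) := by
      have hc : Tendsto K (nhdsWithin (0:ℝ) (Set.Ici 0)) (nhds (K 0)) :=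
        hKcont 0 Set.self_mem_Ici
      rw [hK0] at hc
      exact hc.comp h1'
    have hTt : Tendsto (fun F : Finset D => ∑ x ∈ F, K (J x)) atTop (nhds T) := hT
    have h3 : Tendsto (fun F : Finset D => ∑ x ∈ F, K (J x) + K (S - ∑ x ∈ F, J x))
        atTop (nhds (T + 0)) := hTt.add h2
    rw [add_zero] at h3
    refine ge_of_tendsto' h3 fun F => ?_
    have hSF_nn : 0 ≤ ∑ x ∈ F, J x := Finset.sum_nonneg fun x _ => hJnn x
    have hrem_nn : 0 ≤ S - ∑ x ∈ F, J x :=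
      sub_nonneg.2 (Summable.sum_le_tsum F (fun i _ => hJnn i) hJsummable)
    have hsplit : S = ∑ x ∈ F, J x + (S - ∑ x ∈ F, J x) := by ring
    calc K S = K (∑ x ∈ F, J x + (S - ∑ x ∈ F, J x)) := by rw [← hsplit]
      _ ≤ K (∑ x ∈ F, J x) + K (S - ∑ x ∈ F, J x) := hsub _ _ hSF_nn hrem_nn
      _ ≤ ∑ x ∈ F, K (J x) + K (S - ∑ x ∈ F, J x) := by
          linarith [TVK_finsum_le K hK0 hsub J hJnn F]
  -- assemble
  have hM : 0 ≤ u b - u a := sub_nonneg.2 (hu ⟨le_refl a, hab.le⟩ ⟨hab.le, le_refl b⟩ hab.le)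
  have hMS : 0 ≤ u b - u a - S := by linarith
  have hstep : K (u b - u a) ≤ K (u b - u a - S) + K S := by
    have := hsub (u b - u a - S) S hMS hS_nn
    have heq : u b - u a - S + S = u b - u a := by ring
    rwa [heq] at this
  have hK1 : K (u b - u a - S) ≤ u b - u a - S := hKle _ hMS
  linarith
end

section
/- Let f : (0,∞) → ℝ satisfy f(x) ≥ 0 for all x > 0, f(x) = 0 if and only if x = 1, f extends continuously to [0,1], f is C¹ on (0,1], and f'(x) < 0 for x ∈ (0,1). Define H(ρ) = inf_{x>0} ( ρx + f(x) ) for ρ ≥ 0. Then lim_{ρ→0⁺} H(ρ)/ρ = 1. -/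
/-!
Taking `x = 1` gives `H ρ ≤ ρ`. Conversely, fix `a < 1`: since `f` decreases on `(0, 1]`
and `f a > 0`, for `ρ ≤ f a / a` every `x ≤ a` has `f x ≥ f a ≥ ρ a`, while every `x ≥ a` has
`ρ x ≥ ρ a`; hence `ρ a ≤ H ρ`. So `a ≤ H ρ / ρ ≤ 1` for small `ρ > 0`, for every `a < 1`.
-/

open Filter Set Topology

noncomputable section

def infTransform (f : ℝ → ℝ) (ρ : ℝ) : ℝ :=
  sInf ((fun x => ρ * x + f x) '' Ioi 0)

variable {f : ℝ → ℝ} {ρ : ℝ}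

theorem bddBelow_infTransform_image (hnn : ∀ x, 0 < x → 0 ≤ f x) (hρ : 0 ≤ ρ) :
    BddBelow ((fun x => ρ * x + f x) '' Ioi 0) := by
  refine ⟨0, ?_⟩
  rintro _ ⟨x, hx, rfl⟩
  have := hnn x hx
  have := mul_nonneg hρ (le_of_lt hx)
  dsimp only
  linarith

theorem infTransform_le_self (hnn : ∀ x, 0 < x → 0 ≤ f x) (hf1 : f 1 = 0) (hρ : 0 ≤ ρ) :
    infTransform f ρ ≤ ρ :=
  calc infTransform f ρ ≤ ρ * 1 + f 1 :=
        csInf_le (bddBelow_infTransform_image hnn hρ) ⟨1, mem_Ioi.2 one_pos, rfl⟩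
    _ = ρ := by rw [hf1, mul_one, add_zero]

theorem mul_le_infTransform (hnn : ∀ x, 0 < x → 0 ≤ f x) {a : ℝ}
    (hanti : AntitoneOn f (Ioc 0 a)) (ha : 0 < a) (hρ : 0 ≤ ρ) (hρa : ρ * a ≤ f a) :
    ρ * a ≤ infTransform f ρ := by
  refine le_csInf ((nonempty_Ioi).image _) ?_
  rintro _ ⟨x, hx, rfl⟩
  rcases le_or_gt x a with hxa | hax
  · have hfx : f a ≤ f x := hanti ⟨hx, hxa⟩ ⟨ha, le_rfl⟩ hxa
    have := mul_nonneg hρ (le_of_lt hx)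
    dsimp only
    linarith
  · have := mul_le_mul_of_nonneg_left hax.le hρ
    have := hnn x hx
    dsimp only
    linarith

theorem tendsto_infTransform_div_nhdsGT_zero (hnn : ∀ x, 0 < x → 0 ≤ f x) (hf1 : f 1 = 0)
    (hpos : ∀ a ∈ Ioo 0 1, 0 < f a) (hanti : AntitoneOn f (Ioc 0 1)) :
    Tendsto (fun ρ => infTransform f ρ / ρ) (𝓝[>] 0) (𝓝 1) := by
  refine tendsto_order.2 ⟨fun b hb => ?_, fun b hb => ?_⟩
  · obtain ⟨a, hba, ha1⟩ := exists_between (max_lt hb one_pos)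
    have ha0 : 0 < a := (le_max_right b 0).trans_lt hba
    have hfa : 0 < f a := hpos a ⟨ha0, ha1⟩
    filter_upwards [Ioo_mem_nhdsGT (div_pos hfa ha0)] with ρ ⟨hρ, hρa⟩
    have hlow : ρ * a ≤ infTransform f ρ :=
      mul_le_infTransform hnn (hanti.mono (Ioc_subset_Ioc_right ha1.le)) ha0 hρ.le
        ((lt_div_iff₀ ha0).1 hρa).le
    calc b < a := (le_max_left b 0).trans_lt hba
      _ ≤ infTransform f ρ / ρ := by rwa [le_div_iff₀ hρ, mul_comm]
  · filter_upwards [self_mem_nhdsWithin] with ρ (hρ : 0 < ρ)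
    calc infTransform f ρ / ρ ≤ 1 := (div_le_one hρ).2 (infTransform_le_self hnn hf1 hρ.le)
      _ < b := hb

end

theorem inf_transform_K3_general (f f' : ℝ → ℝ)
    (hnn : ∀ x : ℝ, 0 < x → 0 ≤ f x)
    (hzero : ∀ x : ℝ, 0 < x → (f x = 0 ↔ x = 1))
    (hderiv : ∀ x ∈ Set.Ioc (0 : ℝ) 1, HasDerivAt f (f' x) x)
    (hf'neg : ∀ x ∈ Set.Ioo (0 : ℝ) 1, f' x < 0)
    (H : ℝ → ℝ)
    (hH : ∀ ρ : ℝ, H ρ = sInf ((fun x => ρ * x + f x) '' Set.Ioi 0)) :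
    Tendsto (fun ρ => H ρ / ρ) (nhdsWithin 0 (Set.Ioi 0)) (nhds 1) := by
  have hanti : AntitoneOn f (Ioc 0 1) := by
    refine antitoneOn_of_hasDerivWithinAt_nonpos (convex_Ioc 0 1)
      (fun x hx => (hderiv x hx).continuousAt.continuousWithinAt) (f' := f') ?_ ?_
    · intro x hx
      rw [interior_Ioc] at hx ⊢
      exact (hderiv x (Ioo_subset_Ioc_self hx)).hasDerivWithinAt
    · intro x hx
      rw [interior_Ioc] at hx
      exact (hf'neg x hx).le
  have hpos : ∀ a ∈ Ioo (0 : ℝ) 1, 0 < f a := fun a ha =>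
    (hnn a ha.1).lt_of_ne fun h => ha.2.ne ((hzero a ha.1).1 h.symm)
  have hH' : H = infTransform f := funext hH
  rw [hH']
  exact tendsto_infTransform_div_nhdsGT_zero hnn ((hzero 1 one_pos).2 rfl) hpos hanti

/-- The infimal transform `H(ρ) = inf_{x>0} (ρx + f(x))` of a nonnegative profile `f`
vanishing only at `x = 1`, continuous on `[0,1]`, C¹ on `(0,1]` with `f' < 0` on
`(0,1)`, satisfies `H(ρ)/ρ → 1` as `ρ → 0⁺` (condition (K3)). -/
theorem inf_transform_K3 (f f' : ℝ → ℝ)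
    (hnn : ∀ x : ℝ, 0 < x → 0 ≤ f x)
    (hzero : ∀ x : ℝ, 0 < x → (f x = 0 ↔ x = 1))
    (hcont : ContinuousOn f (Set.Icc 0 1))
    (hderiv : ∀ x ∈ Set.Ioc (0 : ℝ) 1, HasDerivAt f (f' x) x)
    (hf'cont : ContinuousOn f' (Set.Ioc 0 1))
    (hf'neg : ∀ x ∈ Set.Ioo (0 : ℝ) 1, f' x < 0)
    (H : ℝ → ℝ)
    (hH : ∀ ρ : ℝ, H ρ = sInf ((fun x => ρ * x + f x) '' Set.Ioi 0)) :
    Tendsto (fun ρ => H ρ / ρ) (nhdsWithin 0 (Set.Ioi 0)) (nhds 1) :=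
  inf_transform_K3_general f f' hnn hzero hderiv hf'neg H hH
end
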